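/- arXiv:2105.06669 — 3 statements merged into one kernel-verified Lean document; each statement's English description precedes it below -/
import Mathlib

section
/- Let s ≥ 0, let L be an axes-aligned rectangle, let v be a valuation given by an integrable density, and let k ≥ 1 be an integer. Then Ξ-MMS^{k,s} ≥ MMS^{4k²,s}, where Ξ-MMS^{k,s} is the supremum, over all s-separated guillotine partitions of L into k rectangles P₁,…,P_k, of min_j v(P_j), and MMS^{4k²,s} is the supremum, over all families P₁,…,P_{4k²} of axes-aligned rectangles contained in L that have pairwise intersections of zero Lebesgue measure and are pairwise s-separated, of min_j v(P_j). -/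
open MeasureTheory

noncomputable section

/-- A point of the plane. -/
abbrev Pt := ℝ × ℝ

/-- The ℓ∞ distance between two points of the plane. -/
def linfDist (p q : Pt) : ℝ := max |p.1 - q.1| |p.2 - q.2|

/-- Two pieces of land are `s`-separated: every pair of points, one from each piece,
is at ℓ∞ distance at least `s`. -/
def SepSets (s : ℝ) (A B : Set Pt) : Prop := ∀ p ∈ A, ∀ q ∈ B, s ≤ linfDist p q

/-- An axes-aligned rectangle `[a,b] × [c,d]` with `a < b` and `c < d`. -/
structure Rect where
  a : ℝ
  b : ℝ
  c : ℝ
  d : ℝ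
  hab : a < b
  hcd : c < d

/-- The set of points of a rectangle. -/
def Rect.set (R : Rect) : Set Pt := Set.Icc R.a R.b ×ˢ Set.Icc R.c R.d

/-- The length of the shorter side of a rectangle. -/
def Rect.short (R : Rect) : ℝ := min (R.b - R.a) (R.d - R.c)

/-- The length of the longer side of a rectangle. -/
def Rect.long (R : Rect) : ℝ := max (R.b - R.a) (R.d - R.c)

/-- A rectangle is `r`-fat if its longer side is at most `r` times its shorter side. -/
def Rect.Fat (r : ℝ) (R : Rect) : Prop := R.long ≤ r * R.short

/-- The value of a piece `Z` under the density `f`. -/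
def val (f : Pt → ℝ) (Z : Set Pt) : ℝ := ∫ p in Z, f p

/-- The 1-out-of-`k` maximin share of an agent with density `f` on land `L`
with separation parameter `s`: the supremum over families of `k` axes-aligned
rectangles inside `L`, pairwise intersecting in zero measure and pairwise
`s`-separated, of the minimum value of a rectangle. -/
def MMS (f : Pt → ℝ) (L : Set Pt) (s : ℝ) (k : ℕ) : ℝ :=
  sSup {t : ℝ | ∃ P : Fin k → Rect,
    (∀ j, (P j).set ⊆ L) ∧
    (∀ i j, i ≠ j → volume ((P i).set ∩ (P j).set) = 0) ∧
    (∀ i j, i ≠ j → SepSets s ((P i).set) ((P j).set)) ∧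
    (∀ j, t ≤ val f ((P j).set))}

/-- A valuation given by density `f` is `s`-normalized: there are finitely many
pairwise `s`-separated axes-aligned rectangles, each of value at most 1,
such that `f` vanishes outside their union. -/
def SNormalized (s : ℝ) (f : Pt → ℝ) : Prop :=
  ∃ (N : ℕ) (Q : Fin N → Rect),
    (∀ i j, i ≠ j → SepSets s ((Q i).set) ((Q j).set)) ∧
    (∀ i, val f ((Q i).set) ≤ 1) ∧
    (∀ p, p ∉ ⋃ i, (Q i).set → f p = 0)

/-- The unit square `[0,1] × [0,1]`. -/
def unitSquare : Set Pt := Set.Icc (0 : ℝ) 1 ×ˢ Set.Icc (0 : ℝ) 1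

/-- `Guillotine s a0 a1 b0 b1 P`: the family `P` of rectangles forms an
`s`-separated guillotine partition of `[a0,a1] × [b0,b1]`. -/
inductive Guillotine (s : ℝ) : ℝ → ℝ → ℝ → ℝ → List Rect → Prop
  | single (a0 a1 b0 b1 : ℝ) (P : Rect)
      (h : P.set ⊆ Set.Icc a0 a1 ×ˢ Set.Icc b0 b1) :
      Guillotine s a0 a1 b0 b1 [P]
  | vert (a0 a1 b0 b1 a : ℝ) (h1 : a0 < a) (h2 : a < a1 - s)
      (P1 P2 : List Rect)
      (g1 : Guillotine s a0 a b0 b1 P1)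
      (g2 : Guillotine s (a + s) a1 b0 b1 P2) :
      Guillotine s a0 a1 b0 b1 (P1 ++ P2)
  | horiz (a0 a1 b0 b1 b : ℝ) (h1 : b0 < b) (h2 : b < b1 - s)
      (P1 P2 : List Rect)
      (g1 : Guillotine s a0 a1 b0 b P1)
      (g2 : Guillotine s a0 a1 (b + s) b1 P2) :
      Guillotine s a0 a1 b0 b1 (P1 ++ P2)


/-- The guillotine maximin share: supremum over `s`-separated guillotine
partitions of `[a0,a1] × [b0,b1]` into `k` rectangles of the minimum value. -/
def XiMMS (f : Pt → ℝ) (a0 a1 b0 b1 s : ℝ) (k : ℕ) : ℝ :=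
  sSup {t : ℝ | ∃ P : List Rect, P.length = k ∧ Guillotine s a0 a1 b0 b1 P ∧
    ∀ Q ∈ P, t ≤ val f Q.set}


/-!
Two rectangles with null intersection that are `s`-separated have a gap of width `s` between them
along one of the axes. So among `4k² > (k - 1)²` such rectangles, an Erdős–Szekeres argument yields
`k` of them lying side by side, left to right or bottom to top, and such a row is cut out of the
land by parallel guillotine cuts.
-/

section Chains

variable {α : Type*} [Fintype α]

open Classical in
/-- The number of elements after `a` in a longest `r`-chain starting at `a`. -/
def chainHeight (r : α → α → Prop) (a : α) : ℕ :=
  Nat.findGreatest (fun m => ∃ l : List α, (a :: l).Pairwise r ∧ l.length = m) (Fintype.card α)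

theorem exists_pairwise_cons_length_eq_chainHeight (r : α → α → Prop) (a : α) :
    ∃ l : List α, (a :: l).Pairwise r ∧ l.length = chainHeight r a := by
  classical
  exact Nat.findGreatest_spec (P := fun m => ∃ l : List α, (a :: l).Pairwise r ∧ l.length = m)
    (Nat.zero_le _) ⟨[], List.pairwise_singleton r a, rfl⟩

theorem chainHeight_lt_of_rel {r : α → α → Prop} [IsTrans α r] [Std.Irrefl r] {a b : α}
    (hab : r a b) : chainHeight r b < chainHeight r a := by
  classical
  obtain ⟨l, hl, hlen⟩ := exists_pairwise_cons_length_eq_chainHeight r b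
  have hal : (a :: b :: l).Pairwise r := by
    refine List.pairwise_cons.2 ⟨?_, hl⟩
    rintro x (_ | ⟨_, hx⟩)
    exacts [hab, trans_of r hab (List.rel_of_pairwise_cons hl hx)]
  have hcard : (a :: b :: l).length ≤ Fintype.card α := hal.nodup.length_le_card
  have hle : l.length + 1 ≤ chainHeight r a :=
    Nat.le_findGreatest (by simp only [List.length_cons] at hcard; omega) ⟨b :: l, hal, rfl⟩
  omega

/-- Erdős–Szekeres: without long chains, `a ↦ (chainHeight r a, chainHeight q a)` would be an
injection into `Fin (k - 1) × Fin (k - 1)`. -/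
theorem exists_pairwise_of_sq_lt_card {r q : α → α → Prop}
    [IsTrans α r] [Std.Irrefl r] [IsTrans α q] [Std.Irrefl q]
    (htot : ∀ a b, a ≠ b → r a b ∨ r b a ∨ q a b ∨ q b a)
    {k : ℕ} (hk : (k - 1) ^ 2 < Fintype.card α) :
    ∃ l : List α, l.length = k ∧ (l.Pairwise r ∨ l.Pairwise q) := by
  have long_chain : ∀ (r : α → α → Prop), (∃ a, k - 1 ≤ chainHeight r a) →
      ∃ l : List α, l.length = k ∧ l.Pairwise r := by
    rintro r ⟨a, ha⟩
    obtain ⟨l, hl, hlen⟩ := exists_pairwise_cons_length_eq_chainHeight r a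
    exact ⟨(a :: l).take k, by simp only [List.length_take, List.length_cons]; omega, hl.take⟩
  by_cases hr_long : ∃ a, k - 1 ≤ chainHeight r a
  · obtain ⟨l, hlen, hl⟩ := long_chain r hr_long
    exact ⟨l, hlen, .inl hl⟩
  by_cases hq_long : ∃ a, k - 1 ≤ chainHeight q a
  · obtain ⟨l, hlen, hl⟩ := long_chain q hq_long
    exact ⟨l, hlen, .inr hl⟩
  push Not at hr_long hq_long
  have hinj : Function.Injective fun a =>
      ((⟨chainHeight r a, hr_long a⟩ : Fin (k - 1)),
        (⟨chainHeight q a, hq_long a⟩ : Fin (k - 1))) := by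
    intro a b hab
    by_contra hne
    simp only [Prod.mk.injEq, Fin.mk.injEq] at hab
    rcases htot a b hne with h | h | h | h
    · exact (chainHeight_lt_of_rel h).ne hab.1.symm
    · exact (chainHeight_lt_of_rel h).ne hab.1
    · exact (chainHeight_lt_of_rel h).ne hab.2.symm
    · exact (chainHeight_lt_of_rel h).ne hab.2
  have := Fintype.card_le_of_injective _ hinj
  simp only [Fintype.card_prod, Fintype.card_fin] at this
  nlinarith

end Chains

theorem exists_mem_Icc_abs_sub_lt {s a b a' b' : ℝ} (hs : 0 < s) (hab : a ≤ b) (hab' : a' ≤ b')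
    (h : a' < b + s) (h' : a < b' + s) :
    ∃ x ∈ Set.Icc a b, ∃ y ∈ Set.Icc a' b', |x - y| < s := by
  wlog hle : a ≤ a' generalizing a b a' b'
  · obtain ⟨y, hy, x, hx, hyx⟩ := this hab' hab h' h (le_of_not_ge hle)
    exact ⟨x, hx, y, hy, abs_sub_comm x y ▸ hyx⟩
  refine ⟨min b a', ⟨le_min hab hle, min_le_left _ _⟩, a', ⟨le_rfl, hab'⟩, ?_⟩
  rw [abs_sub_lt_iff]
  constructor <;> cases min_cases b a' <;> linarith

namespace Rect

variable {s : ℝ}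

def LeftOf (s : ℝ) (R S : Rect) : Prop := R.b + s ≤ S.a

def Below (s : ℝ) (R S : Rect) : Prop := R.d + s ≤ S.c

def swap (R : Rect) : Rect := ⟨R.c, R.d, R.a, R.b, R.hcd, R.hab⟩

@[simp]
theorem swap_swap (R : Rect) : R.swap.swap = R := rfl

theorem isTrans_leftOf (hs : 0 ≤ s) : IsTrans Rect (LeftOf s) :=
  ⟨fun R S T (hRS : R.b + s ≤ S.a) (hST : S.b + s ≤ T.a) => show R.b + s ≤ T.a by linarith [S.hab]⟩

theorem irrefl_leftOf (hs : 0 ≤ s) : Std.Irrefl (LeftOf s) :=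
  ⟨fun R (h : R.b + s ≤ R.a) => by linarith [R.hab]⟩

theorem isTrans_below (hs : 0 ≤ s) : IsTrans Rect (Below s) :=
  ⟨fun R S T => (isTrans_leftOf hs).trans R.swap S.swap T.swap⟩

theorem irrefl_below (hs : 0 ≤ s) : Std.Irrefl (Below s) :=
  ⟨fun R => (irrefl_leftOf hs).irrefl R.swap⟩

theorem set_subset_box_iff {R : Rect} {a0 a1 b0 b1 : ℝ} :
    R.set ⊆ Set.Icc a0 a1 ×ˢ Set.Icc b0 b1 ↔ (a0 ≤ R.a ∧ R.b ≤ a1) ∧ (b0 ≤ R.c ∧ R.d ≤ b1) := by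
  rw [Rect.set, Set.prod_subset_prod_iff' ((Set.nonempty_Icc.2 R.hab.le).prod
    (Set.nonempty_Icc.2 R.hcd.le)),
    Set.Icc_subset_Icc_iff R.hab.le, Set.Icc_subset_Icc_iff R.hcd.le]

theorem swap_set_subset_box_iff {R : Rect} {a0 a1 b0 b1 : ℝ} :
    R.swap.set ⊆ Set.Icc b0 b1 ×ˢ Set.Icc a0 a1 ↔ R.set ⊆ Set.Icc a0 a1 ×ˢ Set.Icc b0 b1 := by
  rw [set_subset_box_iff, set_subset_box_iff]
  exact and_comm

theorem volume_inter_pos {R S : Rect} (h₁ : S.a < R.b) (h₂ : R.a < S.b) (h₃ : S.c < R.d)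
    (h₄ : R.c < S.d) : 0 < volume (R.set ∩ S.set) := by
  have hinter : R.set ∩ S.set =
      Set.Icc (max R.a S.a) (min R.b S.b) ×ˢ Set.Icc (max R.c S.c) (min R.d S.d) := by
    simp only [Rect.set, Set.prod_inter_prod, Set.Icc_inter_Icc]
  rw [hinter]
  refine (IsOpen.measure_pos volume (isOpen_Ioo.prod isOpen_Ioo) ?_).trans_le
    (measure_mono (Set.prod_mono Set.Ioo_subset_Icc_self Set.Ioo_subset_Icc_self))
  exact (Set.nonempty_Ioo.2 (max_lt (lt_min R.hab h₂) (lt_min h₁ S.hab))).prod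
    (Set.nonempty_Ioo.2 (max_lt (lt_min R.hcd h₄) (lt_min h₃ S.hcd)))

/-- For `s = 0` the separation is vacuous and the null intersection does the work. -/
theorem leftOf_or_below_of_sepSets (hs : 0 ≤ s) {R S : Rect}
    (hvol : volume (R.set ∩ S.set) = 0) (hsep : SepSets s R.set S.set) :
    LeftOf s R S ∨ LeftOf s S R ∨ Below s R S ∨ Below s S R := by
  by_contra h
  simp only [LeftOf, Below, not_or, not_le] at h
  obtain ⟨h₁, h₂, h₃, h₄⟩ := h
  rcases hs.eq_or_lt with rfl | hs
  · simp only [add_zero] at h₁ h₂ h₃ h₄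
    exact (volume_inter_pos h₁ h₂ h₃ h₄).ne' hvol
  · obtain ⟨x, hx, x', hx', hxx'⟩ := exists_mem_Icc_abs_sub_lt hs R.hab.le S.hab.le h₁ h₂
    obtain ⟨y, hy, y', hy', hyy'⟩ := exists_mem_Icc_abs_sub_lt hs R.hcd.le S.hcd.le h₃ h₄
    exact (hsep (x, y) ⟨hx, hy⟩ (x', y') ⟨hx', hy'⟩).not_gt (max_lt hxx' hyy')

end Rect

namespace Guillotine

variable {s a0 a1 b0 b1 : ℝ}

theorem ne_nil {P : List Rect} (h : Guillotine s a0 a1 b0 b1 P) : P ≠ [] := by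
  induction h <;> simp_all

theorem swap {P : List Rect} (h : Guillotine s a0 a1 b0 b1 P) :
    Guillotine s b0 b1 a0 a1 (P.map Rect.swap) := by
  induction h with
  | single _ _ _ _ R hR => exact .single _ _ _ _ _ (Rect.swap_set_subset_box_iff.2 hR)
  | vert _ _ _ _ a h₁ h₂ _ _ _ _ ih₁ ih₂ =>
    rw [List.map_append]
    exact .horiz _ _ _ _ a h₁ h₂ _ _ ih₁ ih₂
  | horiz _ _ _ _ b h₁ h₂ _ _ _ _ ih₁ ih₂ =>
    rw [List.map_append]
    exact .vert _ _ _ _ b h₁ h₂ _ _ ih₁ ih₂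

/-- Cutting off the leftmost rectangle at its right edge. -/
theorem of_pairwise_leftOf : ∀ {l : List Rect} {a0 : ℝ}, l ≠ [] → l.Pairwise (Rect.LeftOf s) →
    (∀ R ∈ l, R.set ⊆ Set.Icc a0 a1 ×ˢ Set.Icc b0 b1) → Guillotine s a0 a1 b0 b1 l
  | [], _, hne, _, _ => absurd rfl hne
  | [R], _, _, _, hsub => .single _ _ _ _ R (hsub R (List.mem_singleton_self R))
  | R :: S :: l, a0, _, hl, hsub => by
    obtain ⟨hR_left, hl⟩ := List.pairwise_cons.1 hl
    have hR := Rect.set_subset_box_iff.1 (hsub R List.mem_cons_self)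
    have hS := Rect.set_subset_box_iff.1 (hsub S (List.mem_cons_of_mem _ List.mem_cons_self))
    refine .vert a0 a1 b0 b1 R.b (hR.1.1.trans_lt R.hab) ?_ [R] (S :: l)
      (.single _ _ _ _ R ?_) (of_pairwise_leftOf (List.cons_ne_nil _ _) hl ?_)
    · have hRS : R.b + s ≤ S.a := hR_left S List.mem_cons_self
      linarith [S.hab]
    · exact Rect.set_subset_box_iff.2 ⟨⟨hR.1.1, le_rfl⟩, hR.2⟩
    · intro T hT
      have hT' := Rect.set_subset_box_iff.1 (hsub T (List.mem_cons_of_mem _ hT))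
      exact Rect.set_subset_box_iff.2 ⟨⟨hR_left T hT, hT'.1.2⟩, hT'.2⟩

theorem of_pairwise_below {l : List Rect} (hne : l ≠ []) (hl : l.Pairwise (Rect.Below s))
    (hsub : ∀ R ∈ l, R.set ⊆ Set.Icc a0 a1 ×ˢ Set.Icc b0 b1) : Guillotine s a0 a1 b0 b1 l := by
  have hswap : Guillotine s b0 b1 a0 a1 (l.map Rect.swap) := by
    refine of_pairwise_leftOf (by simpa using hne) (List.pairwise_map.2 hl) fun R' hR' => ?_
    obtain ⟨R, hR, rfl⟩ := List.mem_map.1 hR'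
    exact Rect.swap_set_subset_box_iff.2 (hsub R hR)
  simpa [List.map_map, Function.comp_def] using hswap.swap

end Guillotine

theorem le_XiMMS {f : Pt → ℝ} (hint : Integrable f) (hpos : ∀ p, 0 ≤ f p)
    {s a0 a1 b0 b1 t : ℝ} {k : ℕ} {P : List Rect} (hP : Guillotine s a0 a1 b0 b1 P)
    (hlen : P.length = k) (ht : ∀ Q ∈ P, t ≤ val f Q.set) : t ≤ XiMMS f a0 a1 b0 b1 s k := by
  refine le_csSup ⟨∫ p, f p, ?_⟩ ⟨P, hlen, hP, ht⟩
  rintro t' ⟨P', -, hP', ht'⟩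
  obtain ⟨Q, hQ⟩ := List.exists_mem_of_ne_nil P' hP'.ne_nil
  exact (ht' Q hQ).trans (setIntegral_le_integral hint (.of_forall hpos))

theorem XiMMS_nonneg {f : Pt → ℝ} (hpos : ∀ p, 0 ≤ f p) {s a0 a1 b0 b1 : ℝ} {k : ℕ} :
    0 ≤ XiMMS f a0 a1 b0 b1 s k := by
  by_cases h : ∃ P : List Rect, P.length = k ∧ Guillotine s a0 a1 b0 b1 P
  · obtain ⟨P, hlen, hP⟩ := h
    exact Real.sSup_nonneg' ⟨0, ⟨P, hlen, hP, fun Q _ => integral_nonneg hpos⟩, le_rfl⟩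
  · exact Real.sSup_nonneg fun t ⟨P, hlen, hP, _⟩ => absurd ⟨P, hlen, hP⟩ h

theorem stmt14_general (s : ℝ) (hs : 0 ≤ s) (a0 a1 b0 b1 : ℝ)
    (f : Pt → ℝ) (hint : Integrable f) (hpos : ∀ p, 0 ≤ f p)
    (k : ℕ) (hk : 1 ≤ k) :
    MMS f (Set.Icc a0 a1 ×ˢ Set.Icc b0 b1) s (4 * k ^ 2) ≤
      XiMMS f a0 a1 b0 b1 s k := by
  refine Real.sSup_le ?_ (XiMMS_nonneg hpos)
  rintro t ⟨P, hPL, hvol, hsep, ht⟩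
  have := Rect.isTrans_leftOf hs
  have := Rect.irrefl_leftOf hs
  have := Rect.isTrans_below hs
  have := Rect.irrefl_below hs
  obtain ⟨l, hlen, hl⟩ := exists_pairwise_of_sq_lt_card
    (r := InvImage (Rect.LeftOf s) P) (q := InvImage (Rect.Below s) P)
    (fun i j hij => Rect.leftOf_or_below_of_sepSets hs (hvol i j hij) (hsep i j hij))
    (k := k) (by rw [Fintype.card_fin]; nlinarith [Nat.sub_le k 1])
  have hlen' : (l.map P).length = k := by rw [List.length_map, hlen]
  have hne : l.map P ≠ [] := List.ne_nil_of_length_pos (by omega)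
  have hsub : ∀ R ∈ l.map P, R.set ⊆ Set.Icc a0 a1 ×ˢ Set.Icc b0 b1 := by
    simpa using fun i _ => hPL i
  refine le_XiMMS hint hpos (P := l.map P) ?_ hlen' (by simpa using fun i _ => ht i)
  rcases hl with hl | hl
  · exact .of_pairwise_leftOf hne (List.pairwise_map.2 hl) hsub
  · exact .of_pairwise_below hne (List.pairwise_map.2 hl) hsub

/-- The guillotine maximin share with `k` pieces is at least the general
maximin share with `4k²` pieces. -/
theorem stmt14 (s : ℝ) (hs : 0 ≤ s) (a0 a1 b0 b1 : ℝ)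
    (ha : a0 < a1) (hb : b0 < b1)
    (f : Pt → ℝ) (hint : Integrable f) (hpos : ∀ p, 0 ≤ f p)
    (k : ℕ) (hk : 1 ≤ k) :
    MMS f (Set.Icc a0 a1 ×ˢ Set.Icc b0 b1) s (4 * k ^ 2) ≤
      XiMMS f a0 a1 b0 b1 s k :=
  stmt14_general s hs a0 a1 b0 b1 f hint hpos k hk
end
end

section
/- Let s ≥ 0, δ ≥ 0, V > 4δ, let L = [a₀,a₁]×[b₀,b₁] be an axes-aligned rectangle, and let v be a valuation given by an integrable density. Let a₀ = x₀ < x₁ < … < x_d = a₁ and b₀ = y₀ < y₁ < … < y_d = b₁ be grid coordinates such that v([x_i, x_{i+1}]×[b₀,b₁]) ≤ δ for every i and v([a₀,a₁]×[y_j, y_{j+1}]) ≤ δ for every j. Suppose there exists an s-separated guillotine partition of L into k rectangles, each of v-value at least V. Then there exists an s-separated guillotine partition of L into k rectangles, each of whose four corners lies in the grid G = {(x_i, y_j) : 0 ≤ i, j ≤ d}, and each of v-value at least V − 4δ. -/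
open MeasureTheory

noncomputable section

/-!
Each piece is shrunk to the rectangle spanned by the innermost grid lines it contains. Pieces
only shrink, so the cuts of the guillotine partition remain valid cuts. What a piece loses lies
in the two vertical and the two horizontal grid strips through its sides, each of value at most
`δ`. The shrunk rectangle is nondegenerate: otherwise the piece lies in two parallel strips and
has value at most `2δ < V`.
-/

open Set

theorem Fin.exists_mem_Ico_castSucc_succ {α : Type*} [LinearOrder α] {n : ℕ}
    (x : Fin (n + 1) → α) {a : α} (h0 : x 0 ≤ a) (hn : a < x (Fin.last n)) :
    ∃ c : Fin n, a ∈ Ico (x c.castSucc) (x c.succ) := by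
  classical
  set S := Finset.univ.filter fun i => x i ≤ a
  have hS : S.Nonempty := ⟨0, by simpa [S] using h0⟩
  have hmax : x (S.max' hS) ≤ a := by simpa [S] using S.max'_mem hS
  obtain ⟨c, hc⟩ : ∃ c : Fin n, c.castSucc = S.max' hS :=
    Fin.exists_castSucc_eq.mpr fun h => (h ▸ hmax).not_gt hn
  refine ⟨c, hc ▸ hmax, lt_of_not_ge fun h => ?_⟩
  have : c.succ ≤ S.max' hS := S.le_max' _ (by simpa [S] using h)
  exact (hc ▸ this).not_gt c.castSucc_lt_succ

theorem Fin.exists_mem_Ioc_castSucc_succ {α : Type*} [LinearOrder α] {n : ℕ}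
    (x : Fin (n + 1) → α) {b : α} (h0 : x 0 < b) (hn : b ≤ x (Fin.last n)) :
    ∃ c : Fin n, b ∈ Ioc (x c.castSucc) (x c.succ) := by
  obtain ⟨c, hc⟩ := Fin.exists_mem_Ico_castSucc_succ (fun i => OrderDual.toDual (x i.rev))
    (a := OrderDual.toDual b) hn (by simpa using h0)
  refine ⟨c.rev, ?_, ?_⟩
  · simpa [Fin.rev_succ] using hc.2
  · simpa [Fin.rev_castSucc] using hc.1

theorem val_le_add_of_subset_union {f : Pt → ℝ} (hf : Integrable f) (hf0 : ∀ p, 0 ≤ f p)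
    {A B C : Set Pt} (h : A ⊆ B ∪ C) : val f A ≤ val f B + val f C := by
  unfold val
  rw [← integral_add_measure hf.integrableOn hf.integrableOn]
  exact integral_mono_measure
    ((Measure.restrict_mono h le_rfl).trans (Measure.restrict_union_le B C))
    (ae_of_all _ hf0) (Integrable.add_measure hf.integrableOn hf.integrableOn)

namespace Guillotine

variable {s a0 a1 b0 b1 : ℝ} {P : List Rect}

theorem subset_of_mem (hs : 0 ≤ s) (h : Guillotine s a0 a1 b0 b1 P) {Q : Rect} (hQ : Q ∈ P) :
    Q.set ⊆ Icc a0 a1 ×ˢ Icc b0 b1 := by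
  induction h with
  | single _ _ _ _ R hR => rwa [List.mem_singleton.mp hQ]
  | vert _ _ _ _ a h1 h2 _ _ _ _ ih1 ih2 =>
    rcases List.mem_append.mp hQ with hQ | hQ
    · exact (ih1 hQ).trans (prod_mono (Icc_subset_Icc le_rfl (by linarith)) subset_rfl)
    · exact (ih2 hQ).trans (prod_mono (Icc_subset_Icc (by linarith) le_rfl) subset_rfl)
  | horiz _ _ _ _ b h1 h2 _ _ _ _ ih1 ih2 =>
    rcases List.mem_append.mp hQ with hQ | hQ
    · exact (ih1 hQ).trans (prod_mono subset_rfl (Icc_subset_Icc le_rfl (by linarith)))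
    · exact (ih2 hQ).trans (prod_mono subset_rfl (Icc_subset_Icc (by linarith) le_rfl))

theorem exists_shrink {p : Rect → Prop} (h : Guillotine s a0 a1 b0 b1 P)
    (hP : ∀ Q ∈ P, ∃ R : Rect, R.set ⊆ Q.set ∧ p R) :
    ∃ P' : List Rect, P'.length = P.length ∧ Guillotine s a0 a1 b0 b1 P' ∧
      ∀ R ∈ P', p R := by
  induction h with
  | single a0 a1 b0 b1 Q hQ =>
    obtain ⟨R, hRQ, hR⟩ := hP Q List.mem_cons_self
    exact ⟨[R], rfl, single _ _ _ _ R (hRQ.trans hQ), by simpa using hR⟩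
  | vert a0 a1 b0 b1 a h1 h2 P1 P2 _ _ ih1 ih2 =>
    obtain ⟨P1', hl1, hg1, hp1⟩ := ih1 fun Q hQ => hP Q (List.mem_append_left _ hQ)
    obtain ⟨P2', hl2, hg2, hp2⟩ := ih2 fun Q hQ => hP Q (List.mem_append_right _ hQ)
    refine ⟨P1' ++ P2', by simp [hl1, hl2], vert _ _ _ _ a h1 h2 _ _ hg1 hg2, ?_⟩
    simpa [or_imp, forall_and] using ⟨hp1, hp2⟩
  | horiz a0 a1 b0 b1 b h1 h2 P1 P2 _ _ ih1 ih2 =>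
    obtain ⟨P1', hl1, hg1, hp1⟩ := ih1 fun Q hQ => hP Q (List.mem_append_left _ hQ)
    obtain ⟨P2', hl2, hg2, hp2⟩ := ih2 fun Q hQ => hP Q (List.mem_append_right _ hQ)
    refine ⟨P1' ++ P2', by simp [hl1, hl2], horiz _ _ _ _ b h1 h2 _ _ hg1 hg2, ?_⟩
    simpa [or_imp, forall_and] using ⟨hp1, hp2⟩

end Guillotine

def Rect.OnGrid {m n : ℕ} (x : Fin (m + 1) → ℝ) (y : Fin (n + 1) → ℝ) (R : Rect) : Prop :=
  (∃ i, R.a = x i) ∧ (∃ i, R.b = x i) ∧ (∃ j, R.c = y j) ∧ (∃ j, R.d = y j)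

theorem Rect.exists_onGrid_subset {f : Pt → ℝ} (hf : Integrable f) (hf0 : ∀ p, 0 ≤ f p)
    {δ : ℝ} {m n : ℕ} {x : Fin (m + 1) → ℝ} {y : Fin (n + 1) → ℝ}
    (hxs : ∀ i : Fin m,
      val f (Icc (x i.castSucc) (x i.succ) ×ˢ Icc (y 0) (y (Fin.last n))) ≤ δ)
    (hys : ∀ j : Fin n,
      val f (Icc (x 0) (x (Fin.last m)) ×ˢ Icc (y j.castSucc) (y j.succ)) ≤ δ)
    {Q : Rect} (hQ : Q.set ⊆ Icc (x 0) (x (Fin.last m)) ×ˢ Icc (y 0) (y (Fin.last n)))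
    (hQv : 2 * δ < val f Q.set) :
    ∃ R : Rect, R.set ⊆ Q.set ∧ R.OnGrid x y ∧ val f Q.set - 4 * δ ≤ val f R.set := by
  obtain ⟨⟨hxa, -⟩, hyc, -⟩ := @hQ (Q.a, Q.c) ⟨⟨le_rfl, Q.hab.le⟩, le_rfl, Q.hcd.le⟩
  obtain ⟨⟨-, hxb⟩, -, hyd⟩ := @hQ (Q.b, Q.d) ⟨⟨Q.hab.le, le_rfl⟩, Q.hcd.le, le_rfl⟩
  obtain ⟨cL, hcL⟩ := Fin.exists_mem_Ico_castSucc_succ x hxa (Q.hab.trans_le hxb)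
  obtain ⟨cR, hcR⟩ := Fin.exists_mem_Ioc_castSucc_succ x (hxa.trans_lt Q.hab) hxb
  obtain ⟨cB, hcB⟩ := Fin.exists_mem_Ico_castSucc_succ y hyc (Q.hcd.trans_le hyd)
  obtain ⟨cT, hcT⟩ := Fin.exists_mem_Ioc_castSucc_succ y (hyc.trans_lt Q.hcd) hyd
  set SL := Icc (x cL.castSucc) (x cL.succ) ×ˢ Icc (y 0) (y (Fin.last n))
  set SR := Icc (x cR.castSucc) (x cR.succ) ×ˢ Icc (y 0) (y (Fin.last n))
  set SB := Icc (x 0) (x (Fin.last m)) ×ˢ Icc (y cB.castSucc) (y cB.succ)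
  set ST := Icc (x 0) (x (Fin.last m)) ×ˢ Icc (y cT.castSucc) (y cT.succ)
  have hL : ∀ p ∈ Q.set, p.1 ≤ x cL.succ → p ∈ SL :=
    fun p hp h => ⟨⟨hcL.1.trans hp.1.1, h⟩, (hQ hp).2⟩
  have hR : ∀ p ∈ Q.set, x cR.castSucc ≤ p.1 → p ∈ SR :=
    fun p hp h => ⟨⟨h, hp.1.2.trans hcR.2⟩, (hQ hp).2⟩
  have hB : ∀ p ∈ Q.set, p.2 ≤ y cB.succ → p ∈ SB :=
    fun p hp h => ⟨(hQ hp).1, hcB.1.trans hp.2.1, h⟩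
  have hT : ∀ p ∈ Q.set, y cT.castSucc ≤ p.2 → p ∈ ST :=
    fun p hp h => ⟨(hQ hp).1, h, hp.2.2.trans hcT.2⟩
  have hval2 : ∀ {A B C : Set Pt}, A ⊆ B ∪ C → val f A ≤ val f B + val f C :=
    val_le_add_of_subset_union hf hf0
  have hxlt : x cL.succ < x cR.castSucc := by
    by_contra! hle
    have : Q.set ⊆ SL ∪ SR := fun p hp =>
      (le_total p.1 (x cL.succ)).imp (hL p hp) fun h => hR p hp (hle.trans h)
    linarith [hval2 this, hxs cL, hxs cR]
  have hylt : y cB.succ < y cT.castSucc := by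
    by_contra! hle
    have : Q.set ⊆ SB ∪ ST := fun p hp =>
      (le_total p.2 (y cB.succ)).imp (hB p hp) fun h => hT p hp (hle.trans h)
    linarith [hval2 this, hys cB, hys cT]
  let R : Rect := ⟨x cL.succ, x cR.castSucc, y cB.succ, y cT.castSucc, hxlt, hylt⟩
  have hcover : Q.set ⊆ R.set ∪ SL ∪ SR ∪ SB ∪ ST := by
    intro p hp
    by_cases h1 : p.1 ≤ x cL.succ
    · exact Or.inl <| Or.inl <| Or.inl <| Or.inr <| hL p hp h1
    by_cases h2 : x cR.castSucc ≤ p.1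
    · exact Or.inl <| Or.inl <| Or.inr <| hR p hp h2
    by_cases h3 : p.2 ≤ y cB.succ
    · exact Or.inl <| Or.inr <| hB p hp h3
    by_cases h4 : y cT.castSucc ≤ p.2
    · exact Or.inr <| hT p hp h4
    push Not at h1 h2 h3 h4
    exact Or.inl <| Or.inl <| Or.inl <| Or.inl ⟨⟨h1.le, h2.le⟩, h3.le, h4.le⟩
  refine ⟨R, prod_mono (Icc_subset_Icc hcL.2.le hcR.1.le) (Icc_subset_Icc hcB.2.le hcT.1.le),
    ⟨⟨_, rfl⟩, ⟨_, rfl⟩, ⟨_, rfl⟩, ⟨_, rfl⟩⟩, ?_⟩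
  linarith [hval2 hcover, hval2 (subset_refl (R.set ∪ SL ∪ SR ∪ SB)),
    hval2 (subset_refl (R.set ∪ SL ∪ SR)), hval2 (subset_refl (R.set ∪ SL)),
    hxs cL, hxs cR, hys cB, hys cT]

theorem stmt16_general (s : ℝ) (hs : 0 ≤ s) (δ : ℝ) (hδ : 0 ≤ δ) (V : ℝ) (hV : 4 * δ < V)
    (a0 a1 b0 b1 : ℝ)
    (f : Pt → ℝ) (hint : Integrable f) (hpos : ∀ p, 0 ≤ f p)
    (d : ℕ) (x y : Fin (d + 1) → ℝ)
    (hx0 : x 0 = a0) (hxd : x (Fin.last d) = a1)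
    (hy0 : y 0 = b0) (hyd : y (Fin.last d) = b1)
    (hxs : ∀ i : Fin d,
      val f (Set.Icc (x i.castSucc) (x i.succ) ×ˢ Set.Icc b0 b1) ≤ δ)
    (hys : ∀ j : Fin d,
      val f (Set.Icc a0 a1 ×ˢ Set.Icc (y j.castSucc) (y j.succ)) ≤ δ)
    (k : ℕ)
    (hex : ∃ P : List Rect, P.length = k ∧ Guillotine s a0 a1 b0 b1 P ∧
      ∀ Q ∈ P, V ≤ val f Q.set) :
    ∃ P' : List Rect, P'.length = k ∧ Guillotine s a0 a1 b0 b1 P' ∧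
      ∀ Q ∈ P', (∃ i, Q.a = x i) ∧ (∃ i, Q.b = x i) ∧
        (∃ j, Q.c = y j) ∧ (∃ j, Q.d = y j) ∧ V - 4 * δ ≤ val f Q.set := by
  subst hx0 hxd hy0 hyd
  obtain ⟨P, rfl, hP, hPV⟩ := hex
  obtain ⟨P', hlen, hP', hround⟩ := hP.exists_shrink
    (p := fun R => R.OnGrid x y ∧ V - 4 * δ ≤ val f R.set) fun Q hQ => by
      obtain ⟨R, hRQ, hgrid, hRv⟩ :=
        Rect.exists_onGrid_subset hint hpos hxs hys (hP.subset_of_mem hs hQ)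
          (by linarith [hPV Q hQ])
      exact ⟨R, hRQ, hgrid, by linarith [hPV Q hQ]⟩
  exact ⟨P', hlen, hP', fun R hR => by simpa only [Rect.OnGrid, and_assoc] using hround R hR⟩

/-- Rounding an `s`-separated guillotine partition to a grid whose strips all
have value at most `δ` loses at most `4δ` of the value of each piece. -/
theorem stmt16 (s : ℝ) (hs : 0 ≤ s) (δ : ℝ) (hδ : 0 ≤ δ) (V : ℝ) (hV : 4 * δ < V)
    (a0 a1 b0 b1 : ℝ) (ha : a0 < a1) (hb : b0 < b1)
    (f : Pt → ℝ) (hint : Integrable f) (hpos : ∀ p, 0 ≤ f p)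
    (d : ℕ) (x y : Fin (d + 1) → ℝ)
    (hx : StrictMono x) (hy : StrictMono y)
    (hx0 : x 0 = a0) (hxd : x (Fin.last d) = a1)
    (hy0 : y 0 = b0) (hyd : y (Fin.last d) = b1)
    (hxs : ∀ i : Fin d,
      val f (Set.Icc (x i.castSucc) (x i.succ) ×ˢ Set.Icc b0 b1) ≤ δ)
    (hys : ∀ j : Fin d,
      val f (Set.Icc a0 a1 ×ˢ Set.Icc (y j.castSucc) (y j.succ)) ≤ δ)
    (k : ℕ)
    (hex : ∃ P : List Rect, P.length = k ∧ Guillotine s a0 a1 b0 b1 P ∧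
      ∀ Q ∈ P, V ≤ val f Q.set) :
    ∃ P' : List Rect, P'.length = k ∧ Guillotine s a0 a1 b0 b1 P' ∧
      ∀ Q ∈ P', (∃ i, Q.a = x i) ∧ (∃ i, Q.b = x i) ∧
        (∃ j, Q.c = y j) ∧ (∃ j, Q.d = y j) ∧ V - 4 * δ ≤ val f Q.set :=
  stmt16_general s hs δ hδ V hV a0 a1 b0 b1 f hint hpos d x y hx0 hxd hy0 hyd hxs hys k hex
end
end

section
/- Let s ≥ 0 and let v₁, v₂, v₃ be valuations given by integrable densities, each s-normalized. Let R be an axes-aligned rectangle with v_i(R) ≥ 17 for every i ∈ {1,2,3}. Then there exists a pairwise s-separated family of axes-aligned rectangles A₁, A₂, A₃ ⊆ R such that v_i(A_i) ≥ 1 for every i ∈ {1,2,3}. -/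
open MeasureTheory

noncomputable section

namespace KYD

open Set

/-- Half-open rectangle. -/
def HO (a b c d : ℝ) : Set Pt := Set.Ico a b ×ˢ Set.Ico c d

lemma measHO (a b c d : ℝ) : MeasurableSet (HO a b c d) :=
  measurableSet_Ico.prod measurableSet_Ico

lemma mem_HO {a b c d : ℝ} {p : Pt} :
    p ∈ HO a b c d ↔ (a ≤ p.1 ∧ p.1 < b) ∧ (c ≤ p.2 ∧ p.2 < d) := by
  simp [HO, Set.mem_prod, Set.mem_Ico]

lemma HO_subset {a b c d a' b' c' d' : ℝ} (h1 : a' ≤ a) (h2 : b ≤ b') (h3 : c' ≤ c) (h4 : d ≤ d') :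
    HO a b c d ⊆ HO a' b' c' d' :=
  Set.prod_mono (Ico_subset_Ico h1 h2) (Ico_subset_Ico h3 h4)

lemma HO_subset_Icc {a b c d : ℝ} : HO a b c d ⊆ Icc a b ×ˢ Icc c d :=
  Set.prod_mono Ico_subset_Icc_self Ico_subset_Icc_self

lemma HO_empty_x {a b c d : ℝ} (h : b ≤ a) : HO a b c d = ∅ := by
  simp [HO, Set.Ico_eq_empty (not_lt.2 h)]

lemma HO_empty_y {a b c d : ℝ} (h : d ≤ c) : HO a b c d = ∅ := by
  simp [HO, Set.Ico_eq_empty (not_lt.2 h)]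


lemma null_y (t : ℝ) : (volume : Measure Pt) {p : Pt | p.2 = t} = 0 := by
  have h : {p : Pt | p.2 = t} = ((univ : Set ℝ) ×ˢ ({t} : Set ℝ) : Set Pt) := by
    ext ⟨x, y⟩; simp [Set.mem_prod, eq_comm]
  rw [h, Measure.volume_eq_prod, Measure.prod_prod]
  simp

lemma null_x (t : ℝ) : (volume : Measure Pt) {p : Pt | p.1 = t} = 0 := by
  have h : {p : Pt | p.1 = t} = (({t} : Set ℝ) ×ˢ (univ : Set ℝ) : Set Pt) := by
    ext ⟨x, y⟩; simp [Set.mem_prod, eq_comm]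
  rw [h, Measure.volume_eq_prod, Measure.prod_prod]
  simp

/-- Continuity of a one-parameter sweep of set integrals. -/
lemma cont_sweep {f : Pt → ℝ} (hf : Integrable f) {E : Set Pt} (hE : MeasurableSet E)
    {π : Pt → ℝ} (hπ : Measurable π) (hnull : ∀ t : ℝ, (volume : Measure Pt) {p : Pt | π p = t} = 0) :
    Continuous fun t : ℝ => ∫ p in E ∩ {p | π p < t}, f p := by
  rw [continuous_iff_continuousAt]
  intro t0
  have meas : ∀ t : ℝ, MeasurableSet (E ∩ {p | π p < t}) := by
    intro t
    exact hE.inter (hπ measurableSet_Iio)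
  have rep : ∀ t : ℝ, (∫ p in E ∩ {p | π p < t}, f p) = ∫ p, Set.indicator (E ∩ {p | π p < t}) f p := by
    intro t; exact (integral_indicator (meas t)).symm
  unfold ContinuousAt
  simp_rw [rep]
  apply tendsto_integral_filter_of_dominated_convergence (fun p => |f p|)
  · exact Filter.Eventually.of_forall fun t => (hf.aestronglyMeasurable.indicator (meas t))
  · refine Filter.Eventually.of_forall fun t => Filter.Eventually.of_forall fun p => ?_
    by_cases h : p ∈ E ∩ {p | π p < t}
    · simp [Set.indicator_of_mem h]
    · simp [Set.indicator_of_notMem h, abs_nonneg]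
  · exact hf.abs
  · have hae : ∀ᵐ p : Pt, π p ≠ t0 := by
      rw [ae_iff]
      simpa using hnull t0
    filter_upwards [hae] with p hp
    rcases lt_or_gt_of_ne hp with h | h
    · have hev : (fun t => Set.indicator (E ∩ {p | π p < t}) f p) =ᶠ[nhds t0]
          (fun _ => Set.indicator (E ∩ {p | π p < t0}) f p) := by
        filter_upwards [eventually_gt_nhds h] with t ht
        by_cases hpE : p ∈ E
        · have hm1 : p ∈ E ∩ {p | π p < t} := ⟨hpE, ht⟩
          have hm2 : p ∈ E ∩ {p | π p < t0} := ⟨hpE, h⟩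
          rw [Set.indicator_of_mem hm1, Set.indicator_of_mem hm2]
        · have hm1 : p ∉ E ∩ {p | π p < t} := fun hc => hpE hc.1
          have hm2 : p ∉ E ∩ {p | π p < t0} := fun hc => hpE hc.1
          rw [Set.indicator_of_notMem hm1, Set.indicator_of_notMem hm2]
      exact Filter.Tendsto.congr' hev.symm tendsto_const_nhds
    · have hev : (fun t => Set.indicator (E ∩ {p | π p < t}) f p) =ᶠ[nhds t0]
          (fun _ => Set.indicator (E ∩ {p | π p < t0}) f p) := by
        filter_upwards [eventually_lt_nhds h] with t ht
        have hm1 : p ∉ E ∩ {p | π p < t} := fun hc => absurd hc.2 (not_lt.2 (le_of_lt ht))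
        have hm2 : p ∉ E ∩ {p | π p < t0} := fun hc => absurd hc.2 (not_lt.2 (le_of_lt h))
        rw [Set.indicator_of_notMem hm1, Set.indicator_of_notMem hm2]
      exact Filter.Tendsto.congr' hev.symm tendsto_const_nhds

/-- First hit via IVT. -/
lemma hit {F : ℝ → ℝ} {x0 x1 τ : ℝ} (hc : ContinuousOn F (Icc x0 x1)) (hx : x0 ≤ x1)
    (h0 : F x0 = 0) (h1 : τ ≤ F x1) (hτ : 0 < τ) :
    ∃ t, x0 < t ∧ t ≤ x1 ∧ F t = τ := by
  have hsub := intermediate_value_Icc hx hc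
  have hmem : τ ∈ Icc (F x0) (F x1) := ⟨by rw [h0]; exact le_of_lt hτ, h1⟩
  obtain ⟨t, ht, hFt⟩ := hsub hmem
  refine ⟨t, ?_, ht.2, hFt⟩
  rcases eq_or_lt_of_le ht.1 with h | h
  · exfalso; rw [← h, h0] at hFt; linarith
  · exact h


section Val

variable {f : Pt → ℝ}

lemma val_nonneg (hpos : ∀ p, 0 ≤ f p) (Z : Set Pt) : 0 ≤ val f Z := by
  apply integral_nonneg
  intro x; exact hpos x

lemma val_mono (hf : Integrable f) (hpos : ∀ p, 0 ≤ f p) {Y Z : Set Pt} (h : Y ⊆ Z) :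
    val f Y ≤ val f Z :=
  setIntegral_mono_set hf.integrableOn (Filter.Eventually.of_forall hpos)
    (HasSubset.Subset.eventuallyLE h)

lemma val_empty : val f (∅ : Set Pt) = 0 := by
  simp [val]

lemma val_union (hf : Integrable f) {A B : Set Pt} (hd : Disjoint A B) (hB : MeasurableSet B) :
    val f (A ∪ B) = val f A + val f B :=
  setIntegral_union hd hB hf.integrableOn hf.integrableOn

lemma val_union_le (hf : Integrable f) (hpos : ∀ p, 0 ≤ f p) {A B : Set Pt}
    (hA : MeasurableSet A) (hB : MeasurableSet B) :
    val f (A ∪ B) ≤ val f A + val f B := by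
  have h1 : val f (A ∪ B) = val f A + val f (B \ A) := by
    have : A ∪ B = A ∪ (B \ A) := by rw [Set.union_diff_self]
    rw [this]
    exact val_union hf disjoint_sdiff_self_right (hB.diff hA)
  rw [h1]
  have : val f (B \ A) ≤ val f B := val_mono hf hpos diff_subset
  linarith

/-- Split a half-open rectangle along a vertical coordinate `t` (on the y-axis). -/
lemma val_split_y (hf : Integrable f) {a b c d t : ℝ} (h1 : c ≤ t) (h2 : t ≤ d) :
    val f (HO a b c d) = val f (HO a b c t) + val f (HO a b t d) := by
  have hu : HO a b c d = HO a b c t ∪ HO a b t d := by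
    unfold HO
    rw [← Set.prod_union, Set.Ico_union_Ico_eq_Ico h1 h2]
  have hd : Disjoint (HO a b c t) (HO a b t d) := by
    rw [Set.disjoint_left]
    rintro p hp hq
    rw [mem_HO] at hp hq
    linarith [hp.2.2, hq.2.1]
  rw [hu]
  exact val_union hf hd (measHO _ _ _ _)

lemma val_split_x (hf : Integrable f) {a b c d t : ℝ} (h1 : a ≤ t) (h2 : t ≤ b) :
    val f (HO a b c d) = val f (HO a t c d) + val f (HO t b c d) := by
  have hu : HO a b c d = HO a t c d ∪ HO t b c d := by
    unfold HO
    rw [← Set.union_prod, Set.Ico_union_Ico_eq_Ico h1 h2]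
  have hd : Disjoint (HO a t c d) (HO t b c d) := by
    rw [Set.disjoint_left]
    rintro p hp hq
    rw [mem_HO] at hp hq
    linarith [hp.1.2, hq.1.1]
  rw [hu]
  exact val_union hf hd (measHO _ _ _ _)

end Val


section Core

variable {s : ℝ} {f : Pt → ℝ}

/-- Any half-open `s × s` square has value at most 1 for an `s`-normalized density. -/
lemma sq_bound (hf : Integrable f) (hpos : ∀ p, 0 ≤ f p) (hn : SNormalized s f) (x y : ℝ) :
    val f (HO x (x + s) y (y + s)) ≤ 1 := by
  obtain ⟨N, Q, hsep, hval, hvan⟩ := hn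
  set U : Set Pt := ⋃ i, (Q i).set with hU
  have hUmeas : MeasurableSet U :=
    MeasurableSet.iUnion fun i => (measurableSet_Icc.prod measurableSet_Icc)
  set sq := HO x (x + s) y (y + s) with hsq
  have hsqmeas : MeasurableSet sq := measHO _ _ _ _
  -- decompose
  have hdecomp : val f sq = val f (sq ∩ U) + val f (sq \ U) := by
    have hd : Disjoint (sq ∩ U) (sq \ U) :=
      Set.disjoint_of_subset_left Set.inter_subset_right disjoint_sdiff_self_right
    have hv := val_union hf hd (hsqmeas.diff hUmeas)
    rwa [Set.inter_union_diff] at hv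
  have hzero : val f (sq \ U) = 0 := by
    have : ∀ p ∈ sq \ U, f p = 0 := fun p hp => hvan p hp.2
    calc val f (sq \ U) = ∫ p in sq \ U, (0 : ℝ) := by
          apply setIntegral_congr_fun (hsqmeas.diff hUmeas) this
      _ = 0 := by simp
  rw [hdecomp, hzero, add_zero]
  -- two points of the square are at distance < s in sup norm
  have hclose : ∀ p ∈ sq, ∀ q ∈ sq, linfDist p q < s ∨ sq = ∅ := by
    intro p hp q hq
    left
    rw [hsq, mem_HO] at hp hq
    have h1 : |p.1 - q.1| < s := by
      rw [abs_lt]; constructor <;> [linarith [hp.1.1, hq.1.2]; linarith [hp.1.2, hq.1.1]]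
    have h2 : |p.2 - q.2| < s := by
      rw [abs_lt]; constructor <;> [linarith [hp.2.1, hq.2.2]; linarith [hp.2.2, hq.2.1]]
    exact max_lt h1 h2
  by_cases hne : (sq ∩ U).Nonempty
  · obtain ⟨p0, hp0sq, hp0U⟩ := hne
    obtain ⟨i0, hi0⟩ := Set.mem_iUnion.1 hp0U
    have hsub : sq ∩ U ⊆ (Q i0).set := by
      rintro q ⟨hqsq, hqU⟩
      obtain ⟨i, hi⟩ := Set.mem_iUnion.1 hqU
      by_cases hii : i = i0
      · rwa [hii] at hi
      · exfalso
        have := hsep i i0 hii q hi p0 hi0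
        rcases hclose q hqsq p0 hp0sq with hlt | hemp
        · linarith
        · rw [hemp] at hqsq; exact hqsq
    calc val f (sq ∩ U) ≤ val f (Q i0).set := val_mono hf hpos hsub
      _ ≤ 1 := hval i0
  · rw [Set.not_nonempty_iff_eq_empty] at hne
    rw [hne, val_empty]
    norm_num

/-- Jump bound for a band of height at most `s`. -/
lemma jump1 (hf : Integrable f) (hpos : ∀ p, 0 ≤ f p) (hn : SNormalized s f)
    {u v : ℝ} (hv : v ≤ u + s) (x : ℝ) :
    val f (HO x (x + s) u v) ≤ 1 := by
  have hsub : HO x (x + s) u v ⊆ HO x (x + s) u (u + s) :=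
    HO_subset le_rfl le_rfl le_rfl hv
  exact le_trans (val_mono hf hpos hsub) (sq_bound hf hpos hn x u)

/-- Jump bound for a band of height at most `3s`. -/
lemma jump3 (hf : Integrable f) (hpos : ∀ p, 0 ≤ f p) (hn : SNormalized s f) (hs : 0 ≤ s)
    {u v : ℝ} (hv : v ≤ u + 3 * s) (x : ℝ) :
    val f (HO x (x + s) u v) ≤ 3 := by
  have hsub : HO x (x + s) u v ⊆ HO x (x + s) u (u + 3 * s) :=
    HO_subset le_rfl le_rfl le_rfl hv
  have h1 : val f (HO x (x + s) u (u + 3*s)) =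
      val f (HO x (x + s) u (u + s)) + val f (HO x (x + s) (u + s) (u + 3*s)) :=
    val_split_y hf (by linarith) (by linarith)
  have h2 : val f (HO x (x + s) (u + s) (u + 3*s)) =
      val f (HO x (x + s) (u + s) (u + 2*s)) + val f (HO x (x + s) (u + 2*s) (u + 3*s)) :=
    val_split_y hf (by linarith) (by linarith)
  have b1 := sq_bound hf hpos hn x u
  have b2 : val f (HO x (x+s) (u+s) (u+2*s)) ≤ 1 := by
    have := sq_bound hf hpos hn x (u + s)
    have he : u + s + s = u + 2*s := by ring
    rwa [he] at this
  have b3 : val f (HO x (x+s) (u+2*s) (u+3*s)) ≤ 1 := by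
    have := sq_bound hf hpos hn x (u + 2*s)
    have he : u + 2*s + s = u + 3*s := by ring
    rwa [he] at this
  have hm := val_mono hf hpos hsub
  linarith

/-- Existence of a "window" of value exactly 1, anchored at `α`, via IVT. -/
lemma window (hf : Integrable f) (hpos : ∀ p, 0 ≤ f p) {α β u v : ℝ}
    (hM : 1 ≤ val f (HO α β u v)) :
    ∃ L, α < L ∧ L ≤ β ∧ val f (HO α L u v) = 1 ∧ u < v ∧ α < β := by
  have hαβ : α < β := by
    by_contra h
    rw [HO_empty_x (le_of_not_gt h), val_empty] at hM; linarith
  have huv : u < v := by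
    by_contra h
    rw [HO_empty_y (le_of_not_gt h), val_empty] at hM; linarith
  -- G t := val over E ∩ {p.1 < t} with E the full band
  set E := HO α β u v with hE
  have hcont : Continuous fun t : ℝ => ∫ p in E ∩ {p | p.1 < t}, f p :=
    cont_sweep hf (measHO _ _ _ _) measurable_fst null_x
  have hrep : ∀ t, t ≤ β → (∫ p in E ∩ {p | p.1 < t}, f p) = val f (HO α t u v) := by
    intro t ht
    have hset : E ∩ {p | p.1 < t} = HO α t u v := by
      ext p
      rw [Set.mem_inter_iff, mem_HO, mem_HO]
      constructor
      · rintro ⟨⟨⟨h1, h2⟩, h3⟩, h4⟩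
        exact ⟨⟨h1, h4⟩, h3⟩
      · rintro ⟨⟨h1, h2⟩, h3⟩
        exact ⟨⟨⟨h1, lt_of_lt_of_le h2 ht⟩, h3⟩, h2⟩
    rw [hset]; rfl
  have hc' : ContinuousOn (fun t => ∫ p in E ∩ {p | p.1 < t}, f p) (Icc α β) :=
    hcont.continuousOn
  have h0 : (∫ p in E ∩ {p | p.1 < α}, f p) = 0 := by
    rw [hrep α (le_of_lt hαβ), HO_empty_x le_rfl, val_empty]
  have h1 : (1:ℝ) ≤ ∫ p in E ∩ {p | p.1 < β}, f p := by
    rw [hrep β le_rfl]; exact hM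
  obtain ⟨L, hL1, hL2, hL3⟩ := hit hc' (le_of_lt hαβ) h0 h1 one_pos
  refine ⟨L, hL1, hL2, ?_, huv, hαβ⟩
  rw [← hrep L hL2]; exact hL3

end Core


section Sep

lemma sep_xgap {s xhi xlo : ℝ} {A B : Set Pt} (h : xhi + s ≤ xlo)
    (hA : ∀ p ∈ A, p.1 ≤ xhi) (hB : ∀ q ∈ B, xlo ≤ q.1) : SepSets s A B := by
  intro p hp q hq
  have h1 : s ≤ |p.1 - q.1| := by
    have ha := hA p hp
    have hb := hB q hq
    rw [abs_sub_comm, le_abs]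
    left; linarith
  exact le_trans h1 (le_max_left _ _)

lemma sep_ygap {s yhi ylo : ℝ} {A B : Set Pt} (h : yhi + s ≤ ylo)
    (hA : ∀ p ∈ A, p.2 ≤ yhi) (hB : ∀ q ∈ B, ylo ≤ q.2) : SepSets s A B := by
  intro p hp q hq
  have h1 : s ≤ |p.2 - q.2| := by
    have ha := hA p hp
    have hb := hB q hq
    rw [abs_sub_comm, le_abs]
    left; linarith
  exact le_trans h1 (le_max_right _ _)

lemma sep_symm {s : ℝ} {A B : Set Pt} (h : SepSets s A B) : SepSets s B A := by
  intro q hq p hp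
  have := h p hp q hq
  unfold linfDist at this ⊢
  rwa [abs_sub_comm q.1, abs_sub_comm q.2]

lemma rect_mem_bounds {P : Rect} {p : Pt} (hp : p ∈ P.set) :
    (P.a ≤ p.1 ∧ p.1 ≤ P.b) ∧ (P.c ≤ p.2 ∧ p.2 ≤ P.d) := by
  rw [Rect.set, Set.mem_prod, Set.mem_Icc, Set.mem_Icc] at hp
  exact hp

end Sep

section GGL

variable {s : ℝ} {Ra Rb : ℝ}

/-- Key accounting bound when a window `[α', L]` is served by another agent:
this agent's remaining mass to the right of `L + s` is at least its previous mass
minus `1 + J`. -/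
lemma update_bound {f : Pt → ℝ} (hf : Integrable f) (hpos : ∀ p, 0 ≤ f p)
    {α L u v J : ℝ}
    (hJ : val f (HO L (L + s) u v) ≤ J)
    (hpre : val f (HO α L u v) ≤ 1) :
    val f (HO α Rb u v) - 1 - J ≤ val f (HO (max α (L + s)) Rb u v) := by
  have hcover : HO α Rb u v ⊆ (HO α L u v ∪ HO L (L + s) u v) ∪ HO (max α (L + s)) Rb u v := by
    intro p hp
    rw [mem_HO] at hp
    by_cases h1 : p.1 < L
    · left; left; rw [mem_HO]; exact ⟨⟨hp.1.1, h1⟩, hp.2⟩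
    · by_cases h2 : p.1 < L + s
      · left; right; rw [mem_HO]; exact ⟨⟨le_of_not_gt h1, h2⟩, hp.2⟩
      · right; rw [mem_HO]
        exact ⟨⟨max_le hp.1.1 (le_of_not_gt h2), hp.1.2⟩, hp.2⟩
  have h1 := val_mono hf hpos hcover
  have h2 := val_union_le hf hpos ((measHO α L u v).union (measHO L (L+s) u v)) (measHO (max α (L+s)) Rb u v)
  have h3 := val_union_le hf hpos (measHO α L u v) (measHO L (L+s) u v)
  linarith

/-- Serve two agents in adjacent bands, the first one having the smaller window edge. -/
lemma pair_aux {f1 f2 : Pt → ℝ}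
    (hf1 : Integrable f1) (hp1 : ∀ p, 0 ≤ f1 p)
    (hf2 : Integrable f2) (hp2 : ∀ p, 0 ≤ f2 p)
    {α1 α2 u1 v1 u2 v2 J2 L1 L2 : ℝ}
    (hJ2 : ∀ x, val f2 (HO x (x + s) u2 v2) ≤ J2)
    (hM2 : 2 + J2 ≤ val f2 (HO α2 Rb u2 v2))
    (hW1 : val f1 (HO α1 L1 u1 v1) = 1) (hα1L1 : α1 < L1) (hL1Rb : L1 ≤ Rb) (huv1 : u1 < v1)
    (hW2 : val f2 (HO α2 L2 u2 v2) = 1) (hord : L1 ≤ L2) :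
    ∃ P1 P2 : Rect, P1.set ⊆ Icc α1 Rb ×ˢ Icc u1 v1 ∧ P2.set ⊆ Icc α2 Rb ×ˢ Icc u2 v2 ∧
      SepSets s P1.set P2.set ∧ 1 ≤ val f1 P1.set ∧ 1 ≤ val f2 P2.set := by
  -- piece 1
  refine ⟨⟨α1, L1, u1, v1, hα1L1, huv1⟩, ?_⟩
  have hpre : val f2 (HO α2 L1 u2 v2) ≤ 1 := by
    rw [← hW2]
    exact val_mono hf2 hp2 (HO_subset le_rfl hord le_rfl le_rfl)
  have hup := update_bound (Rb := Rb) hf2 hp2 (hJ2 L1) hpre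
  have hM2' : 1 ≤ val f2 (HO (max α2 (L1 + s)) Rb u2 v2) := by linarith
  obtain ⟨L2', hα2L2', hL2'Rb, hW2', huv2, _⟩ := window hf2 hp2 hM2'
  refine ⟨⟨max α2 (L1 + s), L2', u2, v2, hα2L2', huv2⟩, ?_, ?_, ?_, ?_, ?_⟩
  · exact Set.prod_mono (Icc_subset_Icc le_rfl hL1Rb) (subset_refl _)
  · exact Set.prod_mono (Icc_subset_Icc (le_max_left _ _) hL2'Rb) (subset_refl _)
  · apply sep_xgap (xhi := L1) (xlo := L1 + s) le_rfl
    · intro p hp; exact (rect_mem_bounds hp).1.2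
    · intro q hq
      exact le_trans (le_max_right _ _) (rect_mem_bounds hq).1.1
  · rw [← hW1]
    exact val_mono hf1 hp1 HO_subset_Icc
  · rw [← hW2']
    exact val_mono hf2 hp2 HO_subset_Icc

/-- Two agents in adjacent bands. -/
lemma GGL2adj {f1 f2 : Pt → ℝ}
    (hf1 : Integrable f1) (hp1 : ∀ p, 0 ≤ f1 p)
    (hf2 : Integrable f2) (hp2 : ∀ p, 0 ≤ f2 p)
    {α1 α2 u1 v1 u2 v2 J1 J2 : ℝ}
    (hJ1 : ∀ x, val f1 (HO x (x + s) u1 v1) ≤ J1)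
    (hJ2 : ∀ x, val f2 (HO x (x + s) u2 v2) ≤ J2)
    (hJ1p : 0 ≤ J1) (hJ2p : 0 ≤ J2)
    (hM1 : 2 + J1 ≤ val f1 (HO α1 Rb u1 v1))
    (hM2 : 2 + J2 ≤ val f2 (HO α2 Rb u2 v2)) :
    ∃ P1 P2 : Rect, P1.set ⊆ Icc α1 Rb ×ˢ Icc u1 v1 ∧ P2.set ⊆ Icc α2 Rb ×ˢ Icc u2 v2 ∧
      SepSets s P1.set P2.set ∧ 1 ≤ val f1 P1.set ∧ 1 ≤ val f2 P2.set := by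
  obtain ⟨L1, hα1L1, hL1Rb, hW1, huv1, _⟩ := window hf1 hp1 (by linarith : 1 ≤ val f1 (HO α1 Rb u1 v1))
  obtain ⟨L2, hα2L2, hL2Rb, hW2, huv2, _⟩ := window hf2 hp2 (by linarith : 1 ≤ val f2 (HO α2 Rb u2 v2))
  rcases le_total L1 L2 with hord | hord
  · exact pair_aux hf1 hp1 hf2 hp2 hJ2 hM2 hW1 hα1L1 hL1Rb huv1 hW2 hord
  · obtain ⟨P2, P1, h2, h1, hsep, hv2, hv1⟩ :=
      pair_aux hf2 hp2 hf1 hp1 hJ1 hM1 hW2 hα2L2 hL2Rb huv2 hW1 hord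
    exact ⟨P1, P2, h1, h2, sep_symm hsep, hv1, hv2⟩

/-- Two agents in `s`-separated bands: independent windows. -/
lemma GGL2sep {f1 f2 : Pt → ℝ}
    (hf1 : Integrable f1) (hp1 : ∀ p, 0 ≤ f1 p)
    (hf2 : Integrable f2) (hp2 : ∀ p, 0 ≤ f2 p)
    {α1 α2 u1 v1 u2 v2 : ℝ}
    (hsep : v1 + s ≤ u2 ∨ v2 + s ≤ u1)
    (hM1 : 1 ≤ val f1 (HO α1 Rb u1 v1))
    (hM2 : 1 ≤ val f2 (HO α2 Rb u2 v2)) :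
    ∃ P1 P2 : Rect, P1.set ⊆ Icc α1 Rb ×ˢ Icc u1 v1 ∧ P2.set ⊆ Icc α2 Rb ×ˢ Icc u2 v2 ∧
      SepSets s P1.set P2.set ∧ 1 ≤ val f1 P1.set ∧ 1 ≤ val f2 P2.set := by
  obtain ⟨L1, hα1L1, hL1Rb, hW1, huv1, _⟩ := window hf1 hp1 hM1
  obtain ⟨L2, hα2L2, hL2Rb, hW2, huv2, _⟩ := window hf2 hp2 hM2
  refine ⟨⟨α1, L1, u1, v1, hα1L1, huv1⟩, ⟨α2, L2, u2, v2, hα2L2, huv2⟩, ?_, ?_, ?_, ?_, ?_⟩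
  · exact Set.prod_mono (Icc_subset_Icc le_rfl hL1Rb) (subset_refl _)
  · exact Set.prod_mono (Icc_subset_Icc le_rfl hL2Rb) (subset_refl _)
  · rcases hsep with h | h
    · apply sep_ygap h
      · intro p hp; exact (rect_mem_bounds hp).2.2
      · intro q hq; exact (rect_mem_bounds hq).2.1
    · apply sep_symm
      apply sep_ygap h
      · intro p hp; exact (rect_mem_bounds hp).2.2
      · intro q hq; exact (rect_mem_bounds hq).2.1
  · rw [← hW1]; exact val_mono hf1 hp1 HO_subset_Icc
  · rw [← hW2]; exact val_mono hf2 hp2 HO_subset_Icc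

end GGL


section GGL3

variable {s : ℝ} {Ra Rb : ℝ}

/-- Three agents in consecutive bands 1–2–3, where bands 1 and 3 are `s`-separated. -/
lemma GGL3path {f1 f2 f3 : Pt → ℝ}
    (hf1 : Integrable f1) (hp1 : ∀ p, 0 ≤ f1 p)
    (hf2 : Integrable f2) (hp2 : ∀ p, 0 ≤ f2 p)
    (hf3 : Integrable f3) (hp3 : ∀ p, 0 ≤ f3 p)
    {α1 α2 α3 u1 v1 u2 v2 u3 v3 J1 J2 J3 : ℝ}
    (hJ1 : ∀ x, val f1 (HO x (x + s) u1 v1) ≤ J1)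
    (hJ2 : ∀ x, val f2 (HO x (x + s) u2 v2) ≤ J2)
    (hJ3 : ∀ x, val f3 (HO x (x + s) u3 v3) ≤ J3)
    (hJ1p : 0 ≤ J1) (hJ2p : 0 ≤ J2) (hJ3p : 0 ≤ J3)
    (hsep13 : v1 + s ≤ u3 ∨ v3 + s ≤ u1)
    (hM1 : 2 + J1 ≤ val f1 (HO α1 Rb u1 v1))
    (hM2 : 3 + 2 * J2 ≤ val f2 (HO α2 Rb u2 v2))
    (hM3 : 2 + J3 ≤ val f3 (HO α3 Rb u3 v3)) :
    ∃ P1 P2 P3 : Rect,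
      P1.set ⊆ Icc α1 Rb ×ˢ Icc u1 v1 ∧ P2.set ⊆ Icc α2 Rb ×ˢ Icc u2 v2 ∧
      P3.set ⊆ Icc α3 Rb ×ˢ Icc u3 v3 ∧
      SepSets s P1.set P2.set ∧ SepSets s P1.set P3.set ∧ SepSets s P2.set P3.set ∧
      1 ≤ val f1 P1.set ∧ 1 ≤ val f2 P2.set ∧ 1 ≤ val f3 P3.set := by
  obtain ⟨L1, hα1L1, hL1Rb, hW1, huv1, _⟩ := window hf1 hp1 (by linarith : 1 ≤ val f1 (HO α1 Rb u1 v1))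
  obtain ⟨L2, hα2L2, hL2Rb, hW2, huv2, _⟩ := window hf2 hp2 (by linarith : 1 ≤ val f2 (HO α2 Rb u2 v2))
  obtain ⟨L3, hα3L3, hL3Rb, hW3, huv3, _⟩ := window hf3 hp3 (by linarith : 1 ≤ val f3 (HO α3 Rb u3 v3))
  have serve2 : ∀ L : ℝ, L ≤ L2 → 2 + J2 ≤ val f2 (HO (max α2 (L + s)) Rb u2 v2) := by
    intro L hL
    have hpre : val f2 (HO α2 L u2 v2) ≤ 1 := by
      rw [← hW2]; exact val_mono hf2 hp2 (HO_subset le_rfl hL le_rfl le_rfl)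
    have := update_bound (Rb := Rb) hf2 hp2 (hJ2 L) hpre
    linarith
  rcases le_total L1 L2 with h12 | h21
  · rcases le_total L1 L3 with h13 | h31
    · -- serve agent 1 first
      obtain ⟨P2, P3, hs2, hs3, hsep23, hv2, hv3⟩ :=
        GGL2adj (Rb := Rb) hf2 hp2 hf3 hp3 hJ2 hJ3 hJ2p hJ3p (serve2 L1 h12) hM3
      refine ⟨⟨α1, L1, u1, v1, hα1L1, huv1⟩, P2, P3, ?_, ?_, hs3, ?_, ?_, hsep23, ?_, hv2, hv3⟩
      · exact Set.prod_mono (Icc_subset_Icc le_rfl hL1Rb) (subset_refl _)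
      · exact Set.Subset.trans hs2 (Set.prod_mono (Icc_subset_Icc (le_max_left _ _) le_rfl) (subset_refl _))
      · -- sep 1 2 by x-gap
        apply sep_xgap (xhi := L1) (xlo := L1 + s) le_rfl
        · intro p hp; exact (rect_mem_bounds hp).1.2
        · intro q hq; exact le_trans (le_max_right _ _) ((hs2 hq).1).1
      · -- sep 1 3 by y-gap
        rcases hsep13 with h | h
        · apply sep_ygap h
          · intro p hp; exact (rect_mem_bounds hp).2.2
          · intro q hq; exact ((hs3 hq).2).1
        · apply sep_symm; apply sep_ygap h
          · intro p hp; exact ((hs3 hp).2).2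
          · intro q hq; exact (rect_mem_bounds hq).2.1
      · rw [← hW1]; exact val_mono hf1 hp1 HO_subset_Icc
    · -- L3 ≤ L1 ≤ L2 : serve agent 3 first
      obtain ⟨P1, P2, hs1, hs2, hsep12, hv1, hv2⟩ :=
        GGL2adj (Rb := Rb) hf1 hp1 hf2 hp2 hJ1 hJ2 hJ1p hJ2p hM1 (serve2 L3 (le_trans h31 h12))
      refine ⟨P1, P2, ⟨α3, L3, u3, v3, hα3L3, huv3⟩, hs1, ?_, ?_, hsep12, ?_, ?_, hv1, hv2, ?_⟩
      · exact Set.Subset.trans hs2 (Set.prod_mono (Icc_subset_Icc (le_max_left _ _) le_rfl) (subset_refl _))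
      · exact Set.prod_mono (Icc_subset_Icc le_rfl hL3Rb) (subset_refl _)
      · -- sep 1 3 by y-gap
        rcases hsep13 with h | h
        · apply sep_ygap h
          · intro p hp; exact ((hs1 hp).2).2
          · intro q hq; exact (rect_mem_bounds hq).2.1
        · apply sep_symm; apply sep_ygap h
          · intro p hp; exact (rect_mem_bounds hp).2.2
          · intro q hq; exact ((hs1 hq).2).1
      · -- sep 2 3 : x-gap, P3 is left
        apply sep_symm
        apply sep_xgap (xhi := L3) (xlo := L3 + s) le_rfl
        · intro p hp; exact (rect_mem_bounds hp).1.2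
        · intro q hq; exact le_trans (le_max_right _ _) ((hs2 hq).1).1
      · rw [← hW3]; exact val_mono hf3 hp3 HO_subset_Icc
  · rcases le_total L2 L3 with h23 | h32
    · -- serve agent 2 first
      have hpre1 : val f1 (HO α1 L2 u1 v1) ≤ 1 := by
        rw [← hW1]; exact val_mono hf1 hp1 (HO_subset le_rfl h21 le_rfl le_rfl)
      have hup1 := update_bound (Rb := Rb) hf1 hp1 (hJ1 L2) hpre1
      have hpre3 : val f3 (HO α3 L2 u3 v3) ≤ 1 := by
        rw [← hW3]; exact val_mono hf3 hp3 (HO_subset le_rfl h23 le_rfl le_rfl)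
      have hup3 := update_bound (Rb := Rb) hf3 hp3 (hJ3 L2) hpre3
      obtain ⟨P1, P3, hs1, hs3, hsep13', hv1, hv3⟩ :=
        GGL2sep (Rb := Rb) hf1 hp1 hf3 hp3 hsep13
          (by linarith : 1 ≤ val f1 (HO (max α1 (L2 + s)) Rb u1 v1))
          (by linarith : 1 ≤ val f3 (HO (max α3 (L2 + s)) Rb u3 v3))
      refine ⟨P1, ⟨α2, L2, u2, v2, hα2L2, huv2⟩, P3, ?_, ?_, ?_, ?_, hsep13', ?_, hv1, ?_, hv3⟩
      · exact Set.Subset.trans hs1 (Set.prod_mono (Icc_subset_Icc (le_max_left _ _) le_rfl) (subset_refl _))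
      · exact Set.prod_mono (Icc_subset_Icc le_rfl hL2Rb) (subset_refl _)
      · exact Set.Subset.trans hs3 (Set.prod_mono (Icc_subset_Icc (le_max_left _ _) le_rfl) (subset_refl _))
      · -- sep 1 2 : P2 left of P1
        apply sep_symm
        apply sep_xgap (xhi := L2) (xlo := L2 + s) le_rfl
        · intro p hp; exact (rect_mem_bounds hp).1.2
        · intro q hq; exact le_trans (le_max_right _ _) ((hs1 hq).1).1
      · -- sep 2 3
        apply sep_xgap (xhi := L2) (xlo := L2 + s) le_rfl
        · intro p hp; exact (rect_mem_bounds hp).1.2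
        · intro q hq; exact le_trans (le_max_right _ _) ((hs3 hq).1).1
      · rw [← hW2]; exact val_mono hf2 hp2 HO_subset_Icc
    · -- L3 ≤ L2 ≤ L1 : serve agent 3 first
      obtain ⟨P1, P2, hs1, hs2, hsep12, hv1, hv2⟩ :=
        GGL2adj (Rb := Rb) hf1 hp1 hf2 hp2 hJ1 hJ2 hJ1p hJ2p hM1 (serve2 L3 h32)
      refine ⟨P1, P2, ⟨α3, L3, u3, v3, hα3L3, huv3⟩, hs1, ?_, ?_, hsep12, ?_, ?_, hv1, hv2, ?_⟩
      · exact Set.Subset.trans hs2 (Set.prod_mono (Icc_subset_Icc (le_max_left _ _) le_rfl) (subset_refl _))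
      · exact Set.prod_mono (Icc_subset_Icc le_rfl hL3Rb) (subset_refl _)
      · rcases hsep13 with h | h
        · apply sep_ygap h
          · intro p hp; exact ((hs1 hp).2).2
          · intro q hq; exact (rect_mem_bounds hq).2.1
        · apply sep_symm; apply sep_ygap h
          · intro p hp; exact (rect_mem_bounds hp).2.2
          · intro q hq; exact ((hs1 hq).2).1
      · apply sep_symm
        apply sep_xgap (xhi := L3) (xlo := L3 + s) le_rfl
        · intro p hp; exact (rect_mem_bounds hp).1.2
        · intro q hq; exact le_trans (le_max_right _ _) ((hs2 hq).1).1
      · rw [← hW3]; exact val_mono hf3 hp3 HO_subset_Icc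

/-- Three agents, all bands mutually adjacent. -/
lemma GGL3tri {f1 f2 f3 : Pt → ℝ}
    (hf1 : Integrable f1) (hp1 : ∀ p, 0 ≤ f1 p)
    (hf2 : Integrable f2) (hp2 : ∀ p, 0 ≤ f2 p)
    (hf3 : Integrable f3) (hp3 : ∀ p, 0 ≤ f3 p)
    {α1 α2 α3 u1 v1 u2 v2 u3 v3 J1 J2 J3 : ℝ}
    (hJ1 : ∀ x, val f1 (HO x (x + s) u1 v1) ≤ J1)
    (hJ2 : ∀ x, val f2 (HO x (x + s) u2 v2) ≤ J2)
    (hJ3 : ∀ x, val f3 (HO x (x + s) u3 v3) ≤ J3)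
    (hJ1p : 0 ≤ J1) (hJ2p : 0 ≤ J2) (hJ3p : 0 ≤ J3)
    (hM1 : 3 + 2 * J1 ≤ val f1 (HO α1 Rb u1 v1))
    (hM2 : 3 + 2 * J2 ≤ val f2 (HO α2 Rb u2 v2))
    (hM3 : 3 + 2 * J3 ≤ val f3 (HO α3 Rb u3 v3)) :
    ∃ P1 P2 P3 : Rect,
      P1.set ⊆ Icc α1 Rb ×ˢ Icc u1 v1 ∧ P2.set ⊆ Icc α2 Rb ×ˢ Icc u2 v2 ∧
      P3.set ⊆ Icc α3 Rb ×ˢ Icc u3 v3 ∧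
      SepSets s P1.set P2.set ∧ SepSets s P1.set P3.set ∧ SepSets s P2.set P3.set ∧
      1 ≤ val f1 P1.set ∧ 1 ≤ val f2 P2.set ∧ 1 ≤ val f3 P3.set := by
  obtain ⟨L1, hα1L1, hL1Rb, hW1, huv1, _⟩ := window hf1 hp1 (by linarith : 1 ≤ val f1 (HO α1 Rb u1 v1))
  obtain ⟨L2, hα2L2, hL2Rb, hW2, huv2, _⟩ := window hf2 hp2 (by linarith : 1 ≤ val f2 (HO α2 Rb u2 v2))
  obtain ⟨L3, hα3L3, hL3Rb, hW3, huv3, _⟩ := window hf3 hp3 (by linarith : 1 ≤ val f3 (HO α3 Rb u3 v3))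
  have serve1 : ∀ L : ℝ, L ≤ L1 → 2 + J1 ≤ val f1 (HO (max α1 (L + s)) Rb u1 v1) := by
    intro L hL
    have hpre : val f1 (HO α1 L u1 v1) ≤ 1 := by
      rw [← hW1]; exact val_mono hf1 hp1 (HO_subset le_rfl hL le_rfl le_rfl)
    have := update_bound (Rb := Rb) hf1 hp1 (hJ1 L) hpre
    linarith
  have serve2 : ∀ L : ℝ, L ≤ L2 → 2 + J2 ≤ val f2 (HO (max α2 (L + s)) Rb u2 v2) := by
    intro L hL
    have hpre : val f2 (HO α2 L u2 v2) ≤ 1 := by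
      rw [← hW2]; exact val_mono hf2 hp2 (HO_subset le_rfl hL le_rfl le_rfl)
    have := update_bound (Rb := Rb) hf2 hp2 (hJ2 L) hpre
    linarith
  have serve3 : ∀ L : ℝ, L ≤ L3 → 2 + J3 ≤ val f3 (HO (max α3 (L + s)) Rb u3 v3) := by
    intro L hL
    have hpre : val f3 (HO α3 L u3 v3) ≤ 1 := by
      rw [← hW3]; exact val_mono hf3 hp3 (HO_subset le_rfl hL le_rfl le_rfl)
    have := update_bound (Rb := Rb) hf3 hp3 (hJ3 L) hpre
    linarith
  rcases le_total L1 L2 with h12 | h21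
  · rcases le_total L1 L3 with h13 | h31
    · -- serve agent 1 first
      obtain ⟨P2, P3, hs2, hs3, hsep23, hv2, hv3⟩ :=
        GGL2adj (Rb := Rb) hf2 hp2 hf3 hp3 hJ2 hJ3 hJ2p hJ3p (serve2 L1 h12) (serve3 L1 h13)
      refine ⟨⟨α1, L1, u1, v1, hα1L1, huv1⟩, P2, P3, ?_, ?_, ?_, ?_, ?_, hsep23, ?_, hv2, hv3⟩
      · exact Set.prod_mono (Icc_subset_Icc le_rfl hL1Rb) (subset_refl _)
      · exact Set.Subset.trans hs2 (Set.prod_mono (Icc_subset_Icc (le_max_left _ _) le_rfl) (subset_refl _))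
      · exact Set.Subset.trans hs3 (Set.prod_mono (Icc_subset_Icc (le_max_left _ _) le_rfl) (subset_refl _))
      · apply sep_xgap (xhi := L1) (xlo := L1 + s) le_rfl
        · intro p hp; exact (rect_mem_bounds hp).1.2
        · intro q hq; exact le_trans (le_max_right _ _) ((hs2 hq).1).1
      · apply sep_xgap (xhi := L1) (xlo := L1 + s) le_rfl
        · intro p hp; exact (rect_mem_bounds hp).1.2
        · intro q hq; exact le_trans (le_max_right _ _) ((hs3 hq).1).1
      · rw [← hW1]; exact val_mono hf1 hp1 HO_subset_Icc
    · -- serve agent 3 first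
      obtain ⟨P1, P2, hs1, hs2, hsep12, hv1, hv2⟩ :=
        GGL2adj (Rb := Rb) hf1 hp1 hf2 hp2 hJ1 hJ2 hJ1p hJ2p (serve1 L3 h31) (serve2 L3 (le_trans h31 h12))
      refine ⟨P1, P2, ⟨α3, L3, u3, v3, hα3L3, huv3⟩, ?_, ?_, ?_, hsep12, ?_, ?_, hv1, hv2, ?_⟩
      · exact Set.Subset.trans hs1 (Set.prod_mono (Icc_subset_Icc (le_max_left _ _) le_rfl) (subset_refl _))
      · exact Set.Subset.trans hs2 (Set.prod_mono (Icc_subset_Icc (le_max_left _ _) le_rfl) (subset_refl _))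
      · exact Set.prod_mono (Icc_subset_Icc le_rfl hL3Rb) (subset_refl _)
      · apply sep_symm
        apply sep_xgap (xhi := L3) (xlo := L3 + s) le_rfl
        · intro p hp; exact (rect_mem_bounds hp).1.2
        · intro q hq; exact le_trans (le_max_right _ _) ((hs1 hq).1).1
      · apply sep_symm
        apply sep_xgap (xhi := L3) (xlo := L3 + s) le_rfl
        · intro p hp; exact (rect_mem_bounds hp).1.2
        · intro q hq; exact le_trans (le_max_right _ _) ((hs2 hq).1).1
      · rw [← hW3]; exact val_mono hf3 hp3 HO_subset_Icc
  · rcases le_total L2 L3 with h23 | h32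
    · -- serve agent 2 first
      obtain ⟨P1, P3, hs1, hs3, hsep13, hv1, hv3⟩ :=
        GGL2adj (Rb := Rb) hf1 hp1 hf3 hp3 hJ1 hJ3 hJ1p hJ3p (serve1 L2 h21) (serve3 L2 h23)
      refine ⟨P1, ⟨α2, L2, u2, v2, hα2L2, huv2⟩, P3, ?_, ?_, ?_, ?_, hsep13, ?_, hv1, ?_, hv3⟩
      · exact Set.Subset.trans hs1 (Set.prod_mono (Icc_subset_Icc (le_max_left _ _) le_rfl) (subset_refl _))
      · exact Set.prod_mono (Icc_subset_Icc le_rfl hL2Rb) (subset_refl _)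
      · exact Set.Subset.trans hs3 (Set.prod_mono (Icc_subset_Icc (le_max_left _ _) le_rfl) (subset_refl _))
      · apply sep_symm
        apply sep_xgap (xhi := L2) (xlo := L2 + s) le_rfl
        · intro p hp; exact (rect_mem_bounds hp).1.2
        · intro q hq; exact le_trans (le_max_right _ _) ((hs1 hq).1).1
      · apply sep_xgap (xhi := L2) (xlo := L2 + s) le_rfl
        · intro p hp; exact (rect_mem_bounds hp).1.2
        · intro q hq; exact le_trans (le_max_right _ _) ((hs3 hq).1).1
      · rw [← hW2]; exact val_mono hf2 hp2 HO_subset_Icc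
    · -- serve agent 3 first
      obtain ⟨P1, P2, hs1, hs2, hsep12, hv1, hv2⟩ :=
        GGL2adj (Rb := Rb) hf1 hp1 hf2 hp2 hJ1 hJ2 hJ1p hJ2p (serve1 L3 (le_trans h32 h21)) (serve2 L3 h32)
      refine ⟨P1, P2, ⟨α3, L3, u3, v3, hα3L3, huv3⟩, ?_, ?_, ?_, hsep12, ?_, ?_, hv1, hv2, ?_⟩
      · exact Set.Subset.trans hs1 (Set.prod_mono (Icc_subset_Icc (le_max_left _ _) le_rfl) (subset_refl _))
      · exact Set.Subset.trans hs2 (Set.prod_mono (Icc_subset_Icc (le_max_left _ _) le_rfl) (subset_refl _))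
      · exact Set.prod_mono (Icc_subset_Icc le_rfl hL3Rb) (subset_refl _)
      · apply sep_symm
        apply sep_xgap (xhi := L3) (xlo := L3 + s) le_rfl
        · intro p hp; exact (rect_mem_bounds hp).1.2
        · intro q hq; exact le_trans (le_max_right _ _) ((hs1 hq).1).1
      · apply sep_symm
        apply sep_xgap (xhi := L3) (xlo := L3 + s) le_rfl
        · intro p hp; exact (rect_mem_bounds hp).1.2
        · intro q hq; exact le_trans (le_max_right _ _) ((hs2 hq).1).1
      · rw [← hW3]; exact val_mono hf3 hp3 HO_subset_Icc

end GGL3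


section Sweep

variable {s : ℝ}

lemma inter_y_rep (a b c d t : ℝ) (ht : t ≤ d) :
    HO a b c d ∩ {p : Pt | p.2 < t} = HO a b c t := by
  ext p
  rw [Set.mem_inter_iff, mem_HO, mem_HO]
  constructor
  · rintro ⟨⟨h1, ⟨h2, h3⟩⟩, h4⟩
    exact ⟨h1, h2, h4⟩
  · rintro ⟨h1, h2, h3⟩
    exact ⟨⟨h1, h2, lt_of_lt_of_le h3 ht⟩, h3⟩

/-- Sweep stop for two agents. -/
lemma sweep2 {f1 f2 : Pt → ℝ} (hf1 : Integrable f1) (hf2 : Integrable f2)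
    {Ra Rb c0 Rd τ : ℝ} (hτ : 0 < τ) (hc0Rd : c0 ≤ Rd)
    (hbig : τ ≤ val f1 (HO Ra Rb c0 Rd)) :
    ∃ t, c0 < t ∧ t ≤ Rd ∧ val f1 (HO Ra Rb c0 t) ≤ τ ∧ val f2 (HO Ra Rb c0 t) ≤ τ ∧
      (val f1 (HO Ra Rb c0 t) = τ ∨ val f2 (HO Ra Rb c0 t) = τ) := by
  set E := HO Ra Rb c0 Rd with hE
  have hc1 : Continuous fun t : ℝ => ∫ p in E ∩ {p | p.2 < t}, f1 p :=
    cont_sweep hf1 (measHO _ _ _ _) measurable_snd null_y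
  have hc2 : Continuous fun t : ℝ => ∫ p in E ∩ {p | p.2 < t}, f2 p :=
    cont_sweep hf2 (measHO _ _ _ _) measurable_snd null_y
  have hrep1 : ∀ t, t ≤ Rd → (∫ p in E ∩ {p | p.2 < t}, f1 p) = val f1 (HO Ra Rb c0 t) := by
    intro t ht; rw [hE, inter_y_rep _ _ _ _ _ ht]; rfl
  have hrep2 : ∀ t, t ≤ Rd → (∫ p in E ∩ {p | p.2 < t}, f2 p) = val f2 (HO Ra Rb c0 t) := by
    intro t ht; rw [hE, inter_y_rep _ _ _ _ _ ht]; rfl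
  set F := fun t : ℝ => max (∫ p in E ∩ {p | p.2 < t}, f1 p) (∫ p in E ∩ {p | p.2 < t}, f2 p) with hF
  have hFc : ContinuousOn F (Icc c0 Rd) := (Continuous.max hc1 hc2).continuousOn
  have hF0 : F c0 = 0 := by
    rw [hF]
    simp only
    rw [hrep1 c0 hc0Rd, hrep2 c0 hc0Rd]
    simp [HO_empty_y le_rfl, val_empty]
  have hFRd : τ ≤ F Rd := by
    rw [hF]
    simp only
    rw [hrep1 Rd le_rfl]
    exact le_trans hbig (le_max_left _ _)
  obtain ⟨t, hc0t, htRd, hFt⟩ := hit hFc hc0Rd hF0 hFRd hτ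
  have h1 := hrep1 t htRd
  have h2 := hrep2 t htRd
  have hmax : max (val f1 (HO Ra Rb c0 t)) (val f2 (HO Ra Rb c0 t)) = τ := by
    rw [← h1, ← h2]; exact hFt
  refine ⟨t, hc0t, htRd, ?_, ?_, ?_⟩
  · rw [← hmax]; exact le_max_left _ _
  · rw [← hmax]; exact le_max_right _ _
  · rcases max_choice (val f1 (HO Ra Rb c0 t)) (val f2 (HO Ra Rb c0 t)) with h | h
    · left; rw [← hmax, h]
    · right; rw [← hmax, h]

/-- Sweep stop for three agents. -/
lemma sweep3 {f1 f2 f3 : Pt → ℝ} (hf1 : Integrable f1) (hf2 : Integrable f2) (hf3 : Integrable f3)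
    {Ra Rb c0 Rd τ : ℝ} (hτ : 0 < τ) (hc0Rd : c0 ≤ Rd)
    (hbig : τ ≤ val f1 (HO Ra Rb c0 Rd)) :
    ∃ t, c0 < t ∧ t ≤ Rd ∧ val f1 (HO Ra Rb c0 t) ≤ τ ∧ val f2 (HO Ra Rb c0 t) ≤ τ ∧
      val f3 (HO Ra Rb c0 t) ≤ τ ∧
      (val f1 (HO Ra Rb c0 t) = τ ∨ val f2 (HO Ra Rb c0 t) = τ ∨ val f3 (HO Ra Rb c0 t) = τ) := by
  set E := HO Ra Rb c0 Rd with hE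
  have hc1 : Continuous fun t : ℝ => ∫ p in E ∩ {p | p.2 < t}, f1 p :=
    cont_sweep hf1 (measHO _ _ _ _) measurable_snd null_y
  have hc2 : Continuous fun t : ℝ => ∫ p in E ∩ {p | p.2 < t}, f2 p :=
    cont_sweep hf2 (measHO _ _ _ _) measurable_snd null_y
  have hc3 : Continuous fun t : ℝ => ∫ p in E ∩ {p | p.2 < t}, f3 p :=
    cont_sweep hf3 (measHO _ _ _ _) measurable_snd null_y
  have hrep1 : ∀ t, t ≤ Rd → (∫ p in E ∩ {p | p.2 < t}, f1 p) = val f1 (HO Ra Rb c0 t) := by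
    intro t ht; rw [hE, inter_y_rep _ _ _ _ _ ht]; rfl
  have hrep2 : ∀ t, t ≤ Rd → (∫ p in E ∩ {p | p.2 < t}, f2 p) = val f2 (HO Ra Rb c0 t) := by
    intro t ht; rw [hE, inter_y_rep _ _ _ _ _ ht]; rfl
  have hrep3 : ∀ t, t ≤ Rd → (∫ p in E ∩ {p | p.2 < t}, f3 p) = val f3 (HO Ra Rb c0 t) := by
    intro t ht; rw [hE, inter_y_rep _ _ _ _ _ ht]; rfl
  set F := fun t : ℝ => max (∫ p in E ∩ {p | p.2 < t}, f1 p)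
      (max (∫ p in E ∩ {p | p.2 < t}, f2 p) (∫ p in E ∩ {p | p.2 < t}, f3 p)) with hF
  have hFc : ContinuousOn F (Icc c0 Rd) := (Continuous.max hc1 (Continuous.max hc2 hc3)).continuousOn
  have hF0 : F c0 = 0 := by
    rw [hF]
    simp only
    rw [hrep1 c0 hc0Rd, hrep2 c0 hc0Rd, hrep3 c0 hc0Rd]
    simp [HO_empty_y le_rfl, val_empty]
  have hFRd : τ ≤ F Rd := by
    rw [hF]
    simp only
    rw [hrep1 Rd le_rfl]
    exact le_trans hbig (le_max_left _ _)
  obtain ⟨t, hc0t, htRd, hFt⟩ := hit hFc hc0Rd hF0 hFRd hτ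
  have h1 := hrep1 t htRd
  have h2 := hrep2 t htRd
  have h3 := hrep3 t htRd
  have hmax : max (val f1 (HO Ra Rb c0 t))
      (max (val f2 (HO Ra Rb c0 t)) (val f3 (HO Ra Rb c0 t))) = τ := by
    rw [← h1, ← h2, ← h3]; exact hFt
  refine ⟨t, hc0t, htRd, ?_, ?_, ?_, ?_⟩
  · rw [← hmax]; exact le_max_left _ _
  · rw [← hmax]; exact le_trans (le_max_left _ _) (le_max_right _ _)
  · rw [← hmax]; exact le_trans (le_max_right _ _) (le_max_right _ _)
  · rcases max_choice (val f1 (HO Ra Rb c0 t))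
        (max (val f2 (HO Ra Rb c0 t)) (val f3 (HO Ra Rb c0 t))) with h | h
    · left; rw [← hmax, h]
    · rcases max_choice (val f2 (HO Ra Rb c0 t)) (val f3 (HO Ra Rb c0 t)) with h' | h'
      · right; left; rw [← hmax, h, h']
      · right; right; rw [← hmax, h, h']

end Sweep


section TwoProt

variable {s : ℝ}

lemma twoProtAux (hs : 0 < s) {f1 f2 : Pt → ℝ}
    (hf1 : Integrable f1) (hp1 : ∀ p, 0 ≤ f1 p) (hn1 : SNormalized s f1)
    (hf2 : Integrable f2) (hp2 : ∀ p, 0 ≤ f2 p) (hn2 : SNormalized s f2)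
    {Ra Rb c0 Rd t1 : ℝ}
    (hRaRb : Ra < Rb) (hc0t1 : c0 < t1) (ht1Rd : t1 ≤ Rd)
    (hbud2 : 8 ≤ val f2 (HO Ra Rb c0 Rd))
    (hstop1 : val f1 (HO Ra Rb c0 t1) = 4)
    (hstop2 : val f2 (HO Ra Rb c0 t1) ≤ 4) :
    ∃ P1 P2 : Rect, P1.set ⊆ Icc Ra Rb ×ˢ Icc c0 Rd ∧ P2.set ⊆ Icc Ra Rb ×ˢ Icc c0 Rd ∧
      SepSets s P1.set P2.set ∧ 1 ≤ val f1 P1.set ∧ 1 ≤ val f2 P2.set := by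
  set Y2 := max c0 (t1 - s) with hY2
  have hc0Y2 : c0 ≤ Y2 := le_max_left _ _
  have hY2t1 : Y2 ≤ t1 := max_le (le_of_lt hc0t1) (by linarith)
  have hY2lb : t1 - s ≤ Y2 := le_max_right _ _
  have hsplit1 : val f1 (HO Ra Rb c0 t1) =
      val f1 (HO Ra Rb c0 Y2) + val f1 (HO Ra Rb Y2 t1) := val_split_y hf1 hc0Y2 hY2t1
  by_cases hA : 1 ≤ val f1 (HO Ra Rb c0 Y2)
  · -- bottom slab for agent 1, full top for agent 2
    have hc0Y2' : c0 < Y2 := by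
      by_contra h
      rw [HO_empty_y (le_of_not_gt h), val_empty] at hA
      linarith
    have hY2eq : Y2 = t1 - s := by
      rcases max_cases c0 (t1 - s) with ⟨h1, h2⟩ | ⟨h1, h2⟩
      · rw [hY2, h1] at hc0Y2' ⊢
        linarith
      · rw [hY2, h1]
    have hsplit2 : val f2 (HO Ra Rb c0 Rd) =
        val f2 (HO Ra Rb c0 t1) + val f2 (HO Ra Rb t1 Rd) :=
      val_split_y hf2 (le_of_lt hc0t1) ht1Rd
    have hv2 : 4 ≤ val f2 (HO Ra Rb t1 Rd) := by linarith
    have ht1Rd' : t1 < Rd := by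
      by_contra h
      rw [HO_empty_y (le_of_not_gt h), val_empty] at hv2
      linarith
    refine ⟨⟨Ra, Rb, c0, Y2, hRaRb, hc0Y2'⟩, ⟨Ra, Rb, t1, Rd, hRaRb, ht1Rd'⟩, ?_, ?_, ?_, ?_, ?_⟩
    · exact Set.prod_mono (subset_refl _) (Icc_subset_Icc le_rfl (le_trans hY2t1 ht1Rd))
    · exact Set.prod_mono (subset_refl _) (Icc_subset_Icc (le_of_lt hc0t1) le_rfl)
    · apply sep_ygap (yhi := Y2) (ylo := t1) (by rw [hY2eq]; linarith)
      · intro p hp; exact (rect_mem_bounds hp).2.2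
      · intro q hq; exact (rect_mem_bounds hq).2.1
    · exact le_trans hA (val_mono hf1 hp1 HO_subset_Icc)
    · exact le_trans (by linarith) (val_mono hf2 hp2 HO_subset_Icc)
  · -- agent 1 is concentrated in the strip [Y2, t1)
    push_neg at hA
    have hA' : 3 < val f1 (HO Ra Rb Y2 t1) := by linarith
    set m2 := min Rd (t1 + s) with hm2
    have ht1m2 : t1 ≤ m2 := le_min ht1Rd (by linarith)
    have hm2Rd : m2 ≤ Rd := min_le_left _ _
    have hsplit2 : val f2 (HO Ra Rb c0 Rd) =
        val f2 (HO Ra Rb c0 t1) + val f2 (HO Ra Rb t1 m2) + val f2 (HO Ra Rb m2 Rd) := by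
      rw [val_split_y hf2 (le_of_lt hc0t1) (le_trans ht1m2 hm2Rd),
        val_split_y hf2 ht1m2 hm2Rd, add_assoc]
    have hY2t1nd : Y2 < t1 := by
      by_contra h
      rw [HO_empty_y (le_of_not_gt h), val_empty] at hA'
      linarith
    by_cases hB1 : val f2 (HO Ra Rb t1 m2) ≤ 3
    · -- full top for agent 2 above m2
      have hv2 : 1 ≤ val f2 (HO Ra Rb m2 Rd) := by linarith
      have hm2Rd' : m2 < Rd := by
        by_contra h
        rw [HO_empty_y (le_of_not_gt h), val_empty] at hv2
        linarith
      have hm2eq : m2 = t1 + s := by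
        rcases min_cases Rd (t1 + s) with ⟨h1, h2⟩ | ⟨h1, h2⟩
        · rw [hm2, h1] at hm2Rd' ⊢; linarith
        · rw [hm2, h1]
      refine ⟨⟨Ra, Rb, Y2, t1, hRaRb, hY2t1nd⟩, ⟨Ra, Rb, m2, Rd, hRaRb, hm2Rd'⟩, ?_, ?_, ?_, ?_, ?_⟩
      · exact Set.prod_mono (subset_refl _) (Icc_subset_Icc hc0Y2 ht1Rd)
      · exact Set.prod_mono (subset_refl _)
          (Icc_subset_Icc (le_trans (le_of_lt hc0t1) ht1m2) le_rfl)
      · apply sep_ygap (yhi := t1) (ylo := m2) (by rw [hm2eq])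
        · intro p hp; exact (rect_mem_bounds hp).2.2
        · intro q hq; exact (rect_mem_bounds hq).2.1
      · exact le_trans (by linarith) (val_mono hf1 hp1 HO_subset_Icc)
      · exact le_trans hv2 (val_mono hf2 hp2 HO_subset_Icc)
    · -- both agents in adjacent strips
      push_neg at hB1
      have hJ1 : ∀ x, val f1 (HO x (x + s) Y2 t1) ≤ 1 := fun x =>
        jump1 hf1 hp1 hn1 (by linarith) x
      have hJ2 : ∀ x, val f2 (HO x (x + s) t1 m2) ≤ 1 := fun x =>
        jump1 hf2 hp2 hn2 (by linarith [min_le_right Rd (t1 + s)]) x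
      obtain ⟨P1, P2, hs1, hs2, hsep, hv1, hv2⟩ :=
        GGL2adj (Rb := Rb) hf1 hp1 hf2 hp2 hJ1 hJ2 zero_le_one zero_le_one
          (by linarith : 2 + 1 ≤ val f1 (HO Ra Rb Y2 t1))
          (by linarith : 2 + 1 ≤ val f2 (HO Ra Rb t1 m2))
      refine ⟨P1, P2, ?_, ?_, hsep, hv1, hv2⟩
      · exact Set.Subset.trans hs1
          (Set.prod_mono (subset_refl _) (Icc_subset_Icc hc0Y2 ht1Rd))
      · exact Set.Subset.trans hs2
          (Set.prod_mono (subset_refl _) (Icc_subset_Icc (le_of_lt hc0t1) hm2Rd))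

lemma twoProt (hs : 0 < s) {f1 f2 : Pt → ℝ}
    (hf1 : Integrable f1) (hp1 : ∀ p, 0 ≤ f1 p) (hn1 : SNormalized s f1)
    (hf2 : Integrable f2) (hp2 : ∀ p, 0 ≤ f2 p) (hn2 : SNormalized s f2)
    {Ra Rb c0 Rd : ℝ}
    (hbud1 : 8 ≤ val f1 (HO Ra Rb c0 Rd))
    (hbud2 : 8 ≤ val f2 (HO Ra Rb c0 Rd)) :
    ∃ P1 P2 : Rect, P1.set ⊆ Icc Ra Rb ×ˢ Icc c0 Rd ∧ P2.set ⊆ Icc Ra Rb ×ˢ Icc c0 Rd ∧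
      SepSets s P1.set P2.set ∧ 1 ≤ val f1 P1.set ∧ 1 ≤ val f2 P2.set := by
  have hRaRb : Ra < Rb := by
    by_contra h
    rw [HO_empty_x (le_of_not_gt h), val_empty] at hbud1
    linarith
  have hc0Rd : c0 ≤ Rd := by
    by_contra h
    rw [HO_empty_y (le_of_lt (lt_of_not_ge h)), val_empty] at hbud1
    linarith
  obtain ⟨t1, hc0t1, ht1Rd, hle1, hle2, hstop⟩ :=
    sweep2 hf1 hf2 (by norm_num : (0:ℝ) < 4) hc0Rd (by linarith)
  rcases hstop with h | h
  · exact twoProtAux hs hf1 hp1 hn1 hf2 hp2 hn2 hRaRb hc0t1 ht1Rd hbud2 h hle2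
  · obtain ⟨P2, P1, h2, h1, hsep, hv2, hv1⟩ :=
      twoProtAux hs hf2 hp2 hn2 hf1 hp1 hn1 hRaRb hc0t1 ht1Rd hbud1 h hle1
    exact ⟨P1, P2, h1, h2, sep_symm hsep, hv1, hv2⟩

end TwoProt


section Leaves

variable {s : ℝ}

/-- Case 2a: the stopping agent `g1` has its stop-mass in the bottom strip, and both
other agents are heavy in the strip just above. -/
lemma leaf2a (hs : 0 < s) {g1 g2 g3 : Pt → ℝ}
    (hf1 : Integrable g1) (hp1 : ∀ p, 0 ≤ g1 p) (hn1 : SNormalized s g1)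
    (hf2 : Integrable g2) (hp2 : ∀ p, 0 ≤ g2 p) (hn2 : SNormalized s g2)
    (hf3 : Integrable g3) (hp3 : ∀ p, 0 ≤ g3 p) (hn3 : SNormalized s g3)
    {Ra Rb Rc Rd t1 : ℝ}
    (hRaRb : Ra < Rb) (hRct1 : Rc < t1) (ht1Rd : t1 ≤ Rd)
    (hv1 : 17 ≤ val g1 (HO Ra Rb Rc Rd))
    (hstop1 : val g1 (HO Ra Rb Rc t1) = 4)
    (hA' : val g1 (HO Ra Rb Rc (max Rc (t1 - s))) < 1)
    (ha2 : 5 < val g2 (HO Ra Rb t1 (min Rd (t1 + s))))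
    (ha3 : 5 < val g3 (HO Ra Rb t1 (min Rd (t1 + s)))) :
    ∃ Q1 Q2 Q3 : Rect,
      Q1.set ⊆ Icc Ra Rb ×ˢ Icc Rc Rd ∧ Q2.set ⊆ Icc Ra Rb ×ˢ Icc Rc Rd ∧
      Q3.set ⊆ Icc Ra Rb ×ˢ Icc Rc Rd ∧
      SepSets s Q1.set Q2.set ∧ SepSets s Q1.set Q3.set ∧ SepSets s Q2.set Q3.set ∧
      1 ≤ val g1 Q1.set ∧ 1 ≤ val g2 Q2.set ∧ 1 ≤ val g3 Q3.set := by
  set Y := max Rc (t1 - s) with hY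
  have hRcY : Rc ≤ Y := le_max_left _ _
  have hYt1 : Y ≤ t1 := max_le (le_of_lt hRct1) (by linarith)
  have hYlb : t1 - s ≤ Y := le_max_right _ _
  set m2 := min Rd (t1 + s) with hm2
  have ht1m2 : t1 ≤ m2 := le_min ht1Rd (by linarith)
  have hm2Rd : m2 ≤ Rd := min_le_left _ _
  have hm2ub : m2 ≤ t1 + s := min_le_right _ _
  set m3 := min Rd (t1 + 2*s) with hm3
  have hm2m3 : m2 ≤ m3 := le_min hm2Rd (by linarith [min_le_right Rd (t1 + s)])
  have hm3Rd : m3 ≤ Rd := min_le_left _ _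
  have hm3ub : m3 ≤ t1 + 2*s := min_le_right _ _
  have hsplit1 : val g1 (HO Ra Rb Rc t1) =
      val g1 (HO Ra Rb Rc Y) + val g1 (HO Ra Rb Y t1) := val_split_y hf1 hRcY hYt1
  have hA1 : 3 < val g1 (HO Ra Rb Y t1) := by linarith
  have hJ2 : ∀ x, val g2 (HO x (x + s) t1 m2) ≤ 1 := fun x =>
    jump1 hf2 hp2 hn2 (by linarith) x
  have hJ3 : ∀ x, val g3 (HO x (x + s) t1 m2) ≤ 1 := fun x =>
    jump1 hf3 hp3 hn3 (by linarith) x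
  by_cases hα : 1 ≤ val g1 (HO Ra Rb m3 Rd)
  · -- g1 takes everything above m3
    have hm3Rd' : m3 < Rd := by
      by_contra h
      rw [HO_empty_y (le_of_not_gt h), val_empty] at hα
      linarith
    have hm3eq : m3 = t1 + 2*s := by
      rcases min_cases Rd (t1 + 2*s) with ⟨h1, h2⟩ | ⟨h1, h2⟩
      · rw [hm3, h1] at hm3Rd' ⊢; linarith
      · rw [hm3, h1]
    obtain ⟨Q2, Q3, hs2, hs3, hsep23, hw2, hw3⟩ :=
      GGL2adj (Rb := Rb) hf2 hp2 hf3 hp3 hJ2 hJ3 zero_le_one zero_le_one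
        (by linarith : 2 + 1 ≤ val g2 (HO Ra Rb t1 m2))
        (by linarith : 2 + 1 ≤ val g3 (HO Ra Rb t1 m2))
    refine ⟨⟨Ra, Rb, m3, Rd, hRaRb, hm3Rd'⟩, Q2, Q3, ?_, ?_, ?_, ?_, ?_, hsep23, ?_, hw2, hw3⟩
    · exact Set.prod_mono (subset_refl _)
        (Icc_subset_Icc (le_trans (le_of_lt hRct1) (le_trans ht1m2 hm2m3)) le_rfl)
    · exact Set.Subset.trans hs2 (Set.prod_mono (subset_refl _)
        (Icc_subset_Icc (le_of_lt hRct1) hm2Rd))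
    · exact Set.Subset.trans hs3 (Set.prod_mono (subset_refl _)
        (Icc_subset_Icc (le_of_lt hRct1) hm2Rd))
    · apply sep_symm
      apply sep_ygap (yhi := m2) (ylo := m3) (by rw [hm3eq]; linarith)
      · intro p hp; exact ((hs2 hp).2).2
      · intro q hq; exact (rect_mem_bounds hq).2.1
    · apply sep_symm
      apply sep_ygap (yhi := m2) (ylo := m3) (by rw [hm3eq]; linarith)
      · intro p hp; exact ((hs3 hp).2).2
      · intro q hq; exact (rect_mem_bounds hq).2.1
    · exact le_trans hα (val_mono hf1 hp1 HO_subset_Icc)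
  · -- g1 is served inside the tall band [Y, m3)
    push_neg at hα
    have hsplitfull : val g1 (HO Ra Rb Rc Rd) =
        val g1 (HO Ra Rb Rc Y) + val g1 (HO Ra Rb Y m3) + val g1 (HO Ra Rb m3 Rd) := by
      rw [val_split_y hf1 hRcY (le_trans hYt1 (le_trans ht1m2 (le_trans hm2m3 hm3Rd))),
        val_split_y hf1 (le_trans hYt1 (le_trans ht1m2 hm2m3)) hm3Rd, add_assoc]
    have hM1 : 15 < val g1 (HO Ra Rb Y m3) := by linarith
    have hJ1 : ∀ x, val g1 (HO x (x + s) Y m3) ≤ 3 := fun x =>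
      jump3 hf1 hp1 hn1 (le_of_lt hs) (by linarith) x
    obtain ⟨Q1, Q2, Q3, hs1, hs2, hs3, hsep12, hsep13, hsep23, hw1, hw2, hw3⟩ :=
      GGL3tri (Rb := Rb) hf1 hp1 hf2 hp2 hf3 hp3 hJ1 hJ2 hJ3
        (by norm_num) zero_le_one zero_le_one
        (by linarith : 3 + 2*3 ≤ val g1 (HO Ra Rb Y m3))
        (by linarith : 3 + 2*1 ≤ val g2 (HO Ra Rb t1 m2))
        (by linarith : 3 + 2*1 ≤ val g3 (HO Ra Rb t1 m2))
    refine ⟨Q1, Q2, Q3, ?_, ?_, ?_, hsep12, hsep13, hsep23, hw1, hw2, hw3⟩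
    · exact Set.Subset.trans hs1 (Set.prod_mono (subset_refl _) (Icc_subset_Icc hRcY hm3Rd))
    · exact Set.Subset.trans hs2 (Set.prod_mono (subset_refl _)
        (Icc_subset_Icc (le_of_lt hRct1) hm2Rd))
    · exact Set.Subset.trans hs3 (Set.prod_mono (subset_refl _)
        (Icc_subset_Icc (le_of_lt hRct1) hm2Rd))

/-- Case 2b: the stopping agent `g1` in the bottom strip, `g2` heavy in the strip above,
`g3` light there. -/
lemma leaf2b (hs : 0 < s) {g1 g2 g3 : Pt → ℝ}
    (hf1 : Integrable g1) (hp1 : ∀ p, 0 ≤ g1 p) (hn1 : SNormalized s g1)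
    (hf2 : Integrable g2) (hp2 : ∀ p, 0 ≤ g2 p) (hn2 : SNormalized s g2)
    (hf3 : Integrable g3) (hp3 : ∀ p, 0 ≤ g3 p) (hn3 : SNormalized s g3)
    {Ra Rb Rc Rd t1 : ℝ}
    (hRaRb : Ra < Rb) (hRct1 : Rc < t1) (ht1Rd : t1 ≤ Rd)
    (hv3 : 17 ≤ val g3 (HO Ra Rb Rc Rd))
    (hstop1 : val g1 (HO Ra Rb Rc t1) = 4)
    (hstop3 : val g3 (HO Ra Rb Rc t1) ≤ 4)
    (hA' : val g1 (HO Ra Rb Rc (max Rc (t1 - s))) < 1)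
    (ha2 : 5 < val g2 (HO Ra Rb t1 (min Rd (t1 + s))))
    (ha3 : val g3 (HO Ra Rb t1 (min Rd (t1 + s))) ≤ 5) :
    ∃ Q1 Q2 Q3 : Rect,
      Q1.set ⊆ Icc Ra Rb ×ˢ Icc Rc Rd ∧ Q2.set ⊆ Icc Ra Rb ×ˢ Icc Rc Rd ∧
      Q3.set ⊆ Icc Ra Rb ×ˢ Icc Rc Rd ∧
      SepSets s Q1.set Q2.set ∧ SepSets s Q1.set Q3.set ∧ SepSets s Q2.set Q3.set ∧
      1 ≤ val g1 Q1.set ∧ 1 ≤ val g2 Q2.set ∧ 1 ≤ val g3 Q3.set := by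
  set Y := max Rc (t1 - s) with hY
  have hRcY : Rc ≤ Y := le_max_left _ _
  have hYt1 : Y ≤ t1 := max_le (le_of_lt hRct1) (by linarith)
  have hYlb : t1 - s ≤ Y := le_max_right _ _
  set m2 := min Rd (t1 + s) with hm2
  have ht1m2 : t1 ≤ m2 := le_min ht1Rd (by linarith)
  have hm2Rd : m2 ≤ Rd := min_le_left _ _
  have hm2ub : m2 ≤ t1 + s := min_le_right _ _
  set m3 := min Rd (t1 + 2*s) with hm3
  have hm2m3 : m2 ≤ m3 := le_min hm2Rd (by linarith [min_le_right Rd (t1 + s)])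
  have hm3Rd : m3 ≤ Rd := min_le_left _ _
  have hm3ub : m3 ≤ t1 + 2*s := min_le_right _ _
  have hsplit1 : val g1 (HO Ra Rb Rc t1) =
      val g1 (HO Ra Rb Rc Y) + val g1 (HO Ra Rb Y t1) := val_split_y hf1 hRcY hYt1
  have hA1 : 3 < val g1 (HO Ra Rb Y t1) := by linarith
  have hJ1 : ∀ x, val g1 (HO x (x + s) Y t1) ≤ 1 := fun x =>
    jump1 hf1 hp1 hn1 (by linarith) x
  have hJ2 : ∀ x, val g2 (HO x (x + s) t1 m2) ≤ 1 := fun x =>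
    jump1 hf2 hp2 hn2 (by linarith) x
  by_cases hα : 1 ≤ val g3 (HO Ra Rb m3 Rd)
  · -- g3 takes everything above m3
    have hm3Rd' : m3 < Rd := by
      by_contra h
      rw [HO_empty_y (le_of_not_gt h), val_empty] at hα
      linarith
    have hm3eq : m3 = t1 + 2*s := by
      rcases min_cases Rd (t1 + 2*s) with ⟨h1, h2⟩ | ⟨h1, h2⟩
      · rw [hm3, h1] at hm3Rd' ⊢; linarith
      · rw [hm3, h1]
    obtain ⟨Q1, Q2, hs1, hs2, hsep12, hw1, hw2⟩ :=
      GGL2adj (Rb := Rb) hf1 hp1 hf2 hp2 hJ1 hJ2 zero_le_one zero_le_one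
        (by linarith : 2 + 1 ≤ val g1 (HO Ra Rb Y t1))
        (by linarith : 2 + 1 ≤ val g2 (HO Ra Rb t1 m2))
    refine ⟨Q1, Q2, ⟨Ra, Rb, m3, Rd, hRaRb, hm3Rd'⟩, ?_, ?_, ?_, hsep12, ?_, ?_, hw1, hw2, ?_⟩
    · exact Set.Subset.trans hs1 (Set.prod_mono (subset_refl _)
        (Icc_subset_Icc hRcY ht1Rd))
    · exact Set.Subset.trans hs2 (Set.prod_mono (subset_refl _)
        (Icc_subset_Icc (le_of_lt hRct1) hm2Rd))
    · exact Set.prod_mono (subset_refl _)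
        (Icc_subset_Icc (le_trans (le_of_lt hRct1) (le_trans ht1m2 hm2m3)) le_rfl)
    · -- g1 window is below t1, g3 piece above m3 = t1 + 2s
      apply sep_ygap (yhi := t1) (ylo := m3) (by rw [hm3eq]; linarith)
      · intro p hp; exact ((hs1 hp).2).2
      · intro q hq; exact (rect_mem_bounds hq).2.1
    · apply sep_ygap (yhi := m2) (ylo := m3) (by rw [hm3eq]; linarith)
      · intro p hp; exact ((hs2 hp).2).2
      · intro q hq; exact (rect_mem_bounds hq).2.1
    · exact le_trans hα (val_mono hf3 hp3 HO_subset_Icc)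
  · -- g3 is heavy in the band [m2, m3)
    push_neg at hα
    have hsplitfull : val g3 (HO Ra Rb Rc Rd) =
        val g3 (HO Ra Rb Rc t1) + val g3 (HO Ra Rb t1 m2) + val g3 (HO Ra Rb m2 m3) +
          val g3 (HO Ra Rb m3 Rd) := by
      rw [val_split_y hf3 (le_of_lt hRct1) (le_trans ht1m2 (le_trans hm2m3 hm3Rd)),
        val_split_y hf3 ht1m2 (le_trans hm2m3 hm3Rd),
        val_split_y hf3 hm2m3 hm3Rd]
      ring
    have hb3 : 7 < val g3 (HO Ra Rb m2 m3) := by linarith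
    have hm2m3' : m2 < m3 := by
      by_contra h
      rw [HO_empty_y (le_of_not_gt h), val_empty] at hb3
      linarith
    have hm2Rd' : m2 < Rd := lt_of_lt_of_le hm2m3' hm3Rd
    have hm2eq : m2 = t1 + s := by
      rcases min_cases Rd (t1 + s) with ⟨h1, h2⟩ | ⟨h1, h2⟩
      · rw [hm2, h1] at hm2Rd' ⊢; linarith
      · rw [hm2, h1]
    have hJ3 : ∀ x, val g3 (HO x (x + s) m2 m3) ≤ 1 := fun x =>
      jump1 hf3 hp3 hn3 (by rw [hm2eq]; linarith) x
    obtain ⟨Q1, Q2, Q3, hs1, hs2, hs3, hsep12, hsep13, hsep23, hw1, hw2, hw3⟩ :=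
      GGL3path (Rb := Rb) hf1 hp1 hf2 hp2 hf3 hp3 hJ1 hJ2 hJ3
        zero_le_one zero_le_one zero_le_one
        (Or.inl (by rw [hm2eq] : t1 + s ≤ m2))
        (by linarith : 2 + 1 ≤ val g1 (HO Ra Rb Y t1))
        (by linarith : 3 + 2*1 ≤ val g2 (HO Ra Rb t1 m2))
        (by linarith : 2 + 1 ≤ val g3 (HO Ra Rb m2 m3))
    refine ⟨Q1, Q2, Q3, ?_, ?_, ?_, hsep12, hsep13, hsep23, hw1, hw2, hw3⟩
    · exact Set.Subset.trans hs1 (Set.prod_mono (subset_refl _)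
        (Icc_subset_Icc hRcY ht1Rd))
    · exact Set.Subset.trans hs2 (Set.prod_mono (subset_refl _)
        (Icc_subset_Icc (le_of_lt hRct1) hm2Rd))
    · exact Set.Subset.trans hs3 (Set.prod_mono (subset_refl _)
        (Icc_subset_Icc (le_trans (le_of_lt hRct1) ht1m2) hm3Rd))

end Leaves


section Main

variable {s : ℝ}

lemma afterSweepAux (hs : 0 < s) {g1 g2 g3 : Pt → ℝ}
    (hf1 : Integrable g1) (hp1 : ∀ p, 0 ≤ g1 p) (hn1 : SNormalized s g1)
    (hf2 : Integrable g2) (hp2 : ∀ p, 0 ≤ g2 p) (hn2 : SNormalized s g2)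
    (hf3 : Integrable g3) (hp3 : ∀ p, 0 ≤ g3 p) (hn3 : SNormalized s g3)
    {Ra Rb Rc Rd t1 : ℝ}
    (hRaRb : Ra < Rb) (hRct1 : Rc < t1) (ht1Rd : t1 ≤ Rd)
    (hv1 : 17 ≤ val g1 (HO Ra Rb Rc Rd))
    (hv2 : 17 ≤ val g2 (HO Ra Rb Rc Rd))
    (hv3 : 17 ≤ val g3 (HO Ra Rb Rc Rd))
    (hstop1 : val g1 (HO Ra Rb Rc t1) = 4)
    (hstop2 : val g2 (HO Ra Rb Rc t1) ≤ 4)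
    (hstop3 : val g3 (HO Ra Rb Rc t1) ≤ 4) :
    ∃ Q1 Q2 Q3 : Rect,
      Q1.set ⊆ Icc Ra Rb ×ˢ Icc Rc Rd ∧ Q2.set ⊆ Icc Ra Rb ×ˢ Icc Rc Rd ∧
      Q3.set ⊆ Icc Ra Rb ×ˢ Icc Rc Rd ∧
      SepSets s Q1.set Q2.set ∧ SepSets s Q1.set Q3.set ∧ SepSets s Q2.set Q3.set ∧
      1 ≤ val g1 Q1.set ∧ 1 ≤ val g2 Q2.set ∧ 1 ≤ val g3 Q3.set := by
  set Y := max Rc (t1 - s) with hY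
  have hRcY : Rc ≤ Y := le_max_left _ _
  have hYt1 : Y ≤ t1 := max_le (le_of_lt hRct1) (by linarith)
  have hYlb : t1 - s ≤ Y := le_max_right _ _
  have hsplit1 : val g1 (HO Ra Rb Rc t1) =
      val g1 (HO Ra Rb Rc Y) + val g1 (HO Ra Rb Y t1) := val_split_y hf1 hRcY hYt1
  by_cases hA : 1 ≤ val g1 (HO Ra Rb Rc Y)
  · -- Case 1: bottom slab for g1, twoProt for the others above t1
    have hRcY' : Rc < Y := by
      by_contra h
      rw [HO_empty_y (le_of_not_gt h), val_empty] at hA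
      linarith
    have hYeq : Y = t1 - s := by
      rcases max_cases Rc (t1 - s) with ⟨h1, h2⟩ | ⟨h1, h2⟩
      · rw [hY, h1] at hRcY' ⊢; linarith
      · rw [hY, h1]
    have hb2 : 8 ≤ val g2 (HO Ra Rb t1 Rd) := by
      have := val_split_y (f := g2) hf2 (le_of_lt hRct1) ht1Rd (a := Ra) (b := Rb)
      linarith
    have hb3 : 8 ≤ val g3 (HO Ra Rb t1 Rd) := by
      have := val_split_y (f := g3) hf3 (le_of_lt hRct1) ht1Rd (a := Ra) (b := Rb)
      linarith
    obtain ⟨Q2, Q3, hs2, hs3, hsep23, hw2, hw3⟩ :=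
      twoProt hs hf2 hp2 hn2 hf3 hp3 hn3 hb2 hb3
    refine ⟨⟨Ra, Rb, Rc, Y, hRaRb, hRcY'⟩, Q2, Q3, ?_, ?_, ?_, ?_, ?_, hsep23, ?_, hw2, hw3⟩
    · exact Set.prod_mono (subset_refl _) (Icc_subset_Icc le_rfl (le_trans hYt1 ht1Rd))
    · exact Set.Subset.trans hs2 (Set.prod_mono (subset_refl _)
        (Icc_subset_Icc (le_of_lt hRct1) le_rfl))
    · exact Set.Subset.trans hs3 (Set.prod_mono (subset_refl _)
        (Icc_subset_Icc (le_of_lt hRct1) le_rfl))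
    · apply sep_ygap (yhi := Y) (ylo := t1) (by rw [hYeq]; linarith)
      · intro p hp; exact (rect_mem_bounds hp).2.2
      · intro q hq; exact ((hs2 hq).2).1
    · apply sep_ygap (yhi := Y) (ylo := t1) (by rw [hYeq]; linarith)
      · intro p hp; exact (rect_mem_bounds hp).2.2
      · intro q hq; exact ((hs3 hq).2).1
    · exact le_trans hA (val_mono hf1 hp1 HO_subset_Icc)
  · -- Case 2: g1 concentrated in the strip
    push_neg at hA
    have hA1 : 3 < val g1 (HO Ra Rb Y t1) := by linarith
    set m2 := min Rd (t1 + s) with hm2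
    have ht1m2 : t1 ≤ m2 := le_min ht1Rd (by linarith)
    have hm2Rd : m2 ≤ Rd := min_le_left _ _
    have hm2ub : m2 ≤ t1 + s := min_le_right _ _
    by_cases h2 : val g2 (HO Ra Rb t1 m2) ≤ 5
    · by_cases h3 : val g3 (HO Ra Rb t1 m2) ≤ 5
      · -- Case 2c
        have hsplit2 : val g2 (HO Ra Rb Rc Rd) =
            val g2 (HO Ra Rb Rc t1) + val g2 (HO Ra Rb t1 m2) + val g2 (HO Ra Rb m2 Rd) := by
          rw [val_split_y hf2 (le_of_lt hRct1) (le_trans ht1m2 hm2Rd),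
            val_split_y hf2 ht1m2 hm2Rd, add_assoc]
        have hsplit3 : val g3 (HO Ra Rb Rc Rd) =
            val g3 (HO Ra Rb Rc t1) + val g3 (HO Ra Rb t1 m2) + val g3 (HO Ra Rb m2 Rd) := by
          rw [val_split_y hf3 (le_of_lt hRct1) (le_trans ht1m2 hm2Rd),
            val_split_y hf3 ht1m2 hm2Rd, add_assoc]
        have hb2 : 8 ≤ val g2 (HO Ra Rb m2 Rd) := by linarith
        have hb3 : 8 ≤ val g3 (HO Ra Rb m2 Rd) := by linarith
        have hm2Rd' : m2 < Rd := by
          by_contra h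
          rw [HO_empty_y (le_of_not_gt h), val_empty] at hb2
          linarith
        have hm2eq : m2 = t1 + s := by
          rcases min_cases Rd (t1 + s) with ⟨hh1, hh2⟩ | ⟨hh1, hh2⟩
          · rw [hm2, hh1] at hm2Rd' ⊢; linarith
          · rw [hm2, hh1]
        have hYt1' : Y < t1 := by
          by_contra h
          rw [HO_empty_y (le_of_not_gt h), val_empty] at hA1
          linarith
        obtain ⟨Q2, Q3, hs2, hs3, hsep23, hw2, hw3⟩ :=
          twoProt hs hf2 hp2 hn2 hf3 hp3 hn3 hb2 hb3
        refine ⟨⟨Ra, Rb, Y, t1, hRaRb, hYt1'⟩, Q2, Q3, ?_, ?_, ?_, ?_, ?_, hsep23, ?_, hw2, hw3⟩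
        · exact Set.prod_mono (subset_refl _) (Icc_subset_Icc hRcY ht1Rd)
        · exact Set.Subset.trans hs2 (Set.prod_mono (subset_refl _)
            (Icc_subset_Icc (le_trans (le_of_lt hRct1) ht1m2) le_rfl))
        · exact Set.Subset.trans hs3 (Set.prod_mono (subset_refl _)
            (Icc_subset_Icc (le_trans (le_of_lt hRct1) ht1m2) le_rfl))
        · apply sep_ygap (yhi := t1) (ylo := m2) (by rw [hm2eq])
          · intro p hp; exact (rect_mem_bounds hp).2.2
          · intro q hq; exact ((hs2 hq).2).1
        · apply sep_ygap (yhi := t1) (ylo := m2) (by rw [hm2eq])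
          · intro p hp; exact (rect_mem_bounds hp).2.2
          · intro q hq; exact ((hs3 hq).2).1
        · exact le_trans (by linarith) (val_mono hf1 hp1 HO_subset_Icc)
      · -- Case 2b with g3 heavy: roles (g1, g3, g2)
        push_neg at h3
        obtain ⟨Q1, Q3, Q2, hq1, hq3, hq2, hsep13, hsep12, hsep32, hw1, hw3, hw2⟩ :=
          leaf2b hs hf1 hp1 hn1 hf3 hp3 hn3 hf2 hp2 hn2 hRaRb hRct1 ht1Rd hv2
            hstop1 hstop2 hA h3 h2
        exact ⟨Q1, Q2, Q3, hq1, hq2, hq3, hsep12, hsep13, sep_symm hsep32, hw1, hw2, hw3⟩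
    · by_cases h3 : val g3 (HO Ra Rb t1 m2) ≤ 5
      · -- Case 2b with g2 heavy
        push_neg at h2
        exact leaf2b hs hf1 hp1 hn1 hf2 hp2 hn2 hf3 hp3 hn3 hRaRb hRct1 ht1Rd hv3
          hstop1 hstop3 hA h2 h3
      · -- Case 2a
        push_neg at h2
        push_neg at h3
        exact leaf2a hs hf1 hp1 hn1 hf2 hp2 hn2 hf3 hp3 hn3 hRaRb hRct1 ht1Rd hv1
          hstop1 hA h2 h3

/-- The three-agent theorem on a half-open rectangle. -/
lemma threeProt (hs : 0 < s) {f1 f2 f3 : Pt → ℝ}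
    (hf1 : Integrable f1) (hp1 : ∀ p, 0 ≤ f1 p) (hn1 : SNormalized s f1)
    (hf2 : Integrable f2) (hp2 : ∀ p, 0 ≤ f2 p) (hn2 : SNormalized s f2)
    (hf3 : Integrable f3) (hp3 : ∀ p, 0 ≤ f3 p) (hn3 : SNormalized s f3)
    {Ra Rb Rc Rd : ℝ}
    (hv1 : 17 ≤ val f1 (HO Ra Rb Rc Rd))
    (hv2 : 17 ≤ val f2 (HO Ra Rb Rc Rd))
    (hv3 : 17 ≤ val f3 (HO Ra Rb Rc Rd)) :
    ∃ Q1 Q2 Q3 : Rect,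
      Q1.set ⊆ Icc Ra Rb ×ˢ Icc Rc Rd ∧ Q2.set ⊆ Icc Ra Rb ×ˢ Icc Rc Rd ∧
      Q3.set ⊆ Icc Ra Rb ×ˢ Icc Rc Rd ∧
      SepSets s Q1.set Q2.set ∧ SepSets s Q1.set Q3.set ∧ SepSets s Q2.set Q3.set ∧
      1 ≤ val f1 Q1.set ∧ 1 ≤ val f2 Q2.set ∧ 1 ≤ val f3 Q3.set := by
  have hRaRb : Ra < Rb := by
    by_contra h
    rw [HO_empty_x (le_of_not_gt h), val_empty] at hv1
    linarith
  have hRcRd : Rc ≤ Rd := by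
    by_contra h
    rw [HO_empty_y (le_of_lt (lt_of_not_ge h)), val_empty] at hv1
    linarith
  obtain ⟨t1, hRct1, ht1Rd, hle1, hle2, hle3, hstop⟩ :=
    sweep3 hf1 hf2 hf3 (by norm_num : (0:ℝ) < 4) hRcRd (by linarith)
  rcases hstop with h | h | h
  · exact afterSweepAux hs hf1 hp1 hn1 hf2 hp2 hn2 hf3 hp3 hn3 hRaRb hRct1 ht1Rd
      hv1 hv2 hv3 h hle2 hle3
  · obtain ⟨B, A, C, hB, hA, hC, hsepBA, hsepBC, hsepAC, hwB, hwA, hwC⟩ :=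
      afterSweepAux hs hf2 hp2 hn2 hf1 hp1 hn1 hf3 hp3 hn3 hRaRb hRct1 ht1Rd
        hv2 hv1 hv3 h hle1 hle3
    exact ⟨A, B, C, hA, hB, hC, sep_symm hsepBA, hsepAC, hsepBC, hwA, hwB, hwC⟩
  · obtain ⟨C, A, B, hC, hA, hB, hsepCA, hsepCB, hsepAB, hwC, hwA, hwB⟩ :=
      afterSweepAux hs hf3 hp3 hn3 hf1 hp1 hn1 hf2 hp2 hn2 hRaRb hRct1 ht1Rd
        hv3 hv1 hv2 h hle1 hle2
    exact ⟨A, B, C, hA, hB, hC, hsepAB, sep_symm hsepCA, sep_symm hsepCB, hwA, hwB, hwC⟩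

end Main


section Convert

lemma val_Icc_eq_HO {f : Pt → ℝ} (hf : Integrable f) (a b c d : ℝ) :
    val f (Set.Icc a b ×ˢ Set.Icc c d) = val f (HO a b c d) := by
  have hsub : HO a b c d ⊆ Icc a b ×ˢ Icc c d := HO_subset_Icc
  have hmeasIcc : MeasurableSet (Icc a b ×ˢ Icc c d : Set Pt) :=
    measurableSet_Icc.prod measurableSet_Icc
  have hdiffmeas : MeasurableSet ((Icc a b ×ˢ Icc c d : Set Pt) \ HO a b c d) :=
    hmeasIcc.diff (measHO a b c d)
  have hnull : (volume : Measure Pt) ((Icc a b ×ˢ Icc c d : Set Pt) \ HO a b c d) = 0 := by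
    refine measure_mono_null ?_ (measure_union_null (null_x b) (null_y d))
    rintro p ⟨hp, hnp⟩
    rw [Set.mem_prod, Set.mem_Icc, Set.mem_Icc] at hp
    by_cases h1 : p.1 < b
    · by_cases h2 : p.2 < d
      · exfalso
        apply hnp
        rw [mem_HO]
        exact ⟨⟨hp.1.1, h1⟩, ⟨hp.2.1, h2⟩⟩
      · right
        exact le_antisymm hp.2.2 (le_of_not_gt h2)
    · left
      exact le_antisymm hp.1.2 (le_of_not_gt h1)
  have hzero : val f ((Icc a b ×ˢ Icc c d : Set Pt) \ HO a b c d) = 0 := by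
    unfold val
    rw [Measure.restrict_eq_zero.2 hnull]
    exact integral_zero_measure _
  have hd : Disjoint (HO a b c d) ((Icc a b ×ˢ Icc c d : Set Pt) \ HO a b c d) :=
    Set.disjoint_sdiff_right
  have hu := val_union hf hd hdiffmeas
  rw [Set.union_diff_cancel hsub] at hu
  rw [hu, hzero, add_zero]

end Convert

end KYD

/-- Three `s`-normalized agents valuing a rectangle at least 17 each can each
get an `s`-separated sub-rectangle of value at least 1. -/
theorem stmt18 (s : ℝ) (hs : 0 ≤ s)
    (f : Fin 3 → Pt → ℝ) (hint : ∀ i, Integrable (f i))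
    (hpos : ∀ i p, 0 ≤ f i p) (hnorm : ∀ i, SNormalized s (f i))
    (R : Rect) (hval : ∀ i, (17 : ℝ) ≤ val (f i) R.set) :
    ∃ A : Fin 3 → Rect,
      (∀ i, (A i).set ⊆ R.set) ∧
      (∀ i j, i ≠ j → SepSets s ((A i).set) ((A j).set)) ∧
      (∀ i, 1 ≤ val (f i) ((A i).set)) := by
  rcases eq_or_lt_of_le hs with hs0 | hs0
  · refine ⟨fun _ => R, fun i => subset_refl _, ?_, fun i => le_trans (by norm_num) (hval i)⟩
    intro i j hij p hp q hq
    rw [← hs0]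
    unfold linfDist
    exact le_trans (abs_nonneg _) (le_max_left _ _)
  · have hv : ∀ i, 17 ≤ val (f i) (KYD.HO R.a R.b R.c R.d) := by
      intro i
      rw [← KYD.val_Icc_eq_HO (hint i)]
      exact hval i
    obtain ⟨Q1, Q2, Q3, hq1, hq2, hq3, h12, h13, h23, w1, w2, w3⟩ :=
      KYD.threeProt hs0 (hint 0) (hpos 0) (hnorm 0) (hint 1) (hpos 1) (hnorm 1)
        (hint 2) (hpos 2) (hnorm 2) (hv 0) (hv 1) (hv 2)
    refine ⟨![Q1, Q2, Q3], ?_, ?_, ?_⟩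
    · intro i
      fin_cases i
      · exact hq1
      · exact hq2
      · exact hq3
    · intro i j hij
      fin_cases i <;> fin_cases j
      · exact absurd rfl hij
      · exact h12
      · exact h13
      · exact KYD.sep_symm h12
      · exact absurd rfl hij
      · exact h23
      · exact KYD.sep_symm h13
      · exact KYD.sep_symm h23
      · exact absurd rfl hij
    · intro i
      fin_cases i
      · exact w1
      · exact w2
      · exact w3
end
end
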